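/- arXiv:1710.06199 — 8 statements merged into one kernel-verified Lean document; each statement's English description precedes it below -/
import Mathlib

section
/- Let p ∈ P(k,l) and q ∈ P(l,m) be partitions and let n ∈ ℕ. For all multi-indices α ∈ {1,…,n}^k and β ∈ {1,…,n}^m: Σ_{ζ ∈ {1,…,n}^l} δ_p(α,ζ)·δ_q(ζ,β) = n^{rl(q,p)} · δ_{qp}(α,β), where qp ∈ P(k,m) is the composition of q and p and rl(q,p) is the number of removed loops. In particular, δ_{qp}(α,β) = 1 if and only if there exists ζ ∈ {1,…,n}^l with δ_p(α,ζ) = 1 and δ_q(ζ,β) = 1. -/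
open scoped Classical

namespace PartitionCstar

/-- A partition in `P(k,l)`: an equivalence relation (whose classes are the blocks)
on the disjoint union of `k` upper points and `l` lower points. -/
abbrev Partition (k l : ℕ) := Setoid (Fin k ⊕ Fin l)

/-- `labelsMatch p α β` holds iff, labelling the upper points by `α` and the lower points
by `β`, the strings (blocks) of `p` connect only equal indices. -/
def labelsMatch {n k l : ℕ} (p : Partition k l) (α : Fin k → Fin n) (β : Fin l → Fin n) :
    Prop :=
  ∀ x y : Fin k ⊕ Fin l, p.r x y → Sum.elim α β x = Sum.elim α β y

/-- The delta function `δ_p(α,β) ∈ {0,1}`. -/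
noncomputable def delta {n k l : ℕ} (p : Partition k l) (α : Fin k → Fin n)
    (β : Fin l → Fin n) : ℕ :=
  if labelsMatch p α β then 1 else 0

/-- The relations `R(p)` for a matrix of elements `u` of a unital ring:
`∑_γ δ_p(γ,β) u_{γ₁α₁}⋯u_{γₖαₖ} = ∑_{γ'} δ_p(α,γ') u_{β₁γ'₁}⋯u_{β_lγ'_l}`.
(For `k = 0` resp. `l = 0` the empty product is `1`, which yields the conventions
`δ_p(∅,β)·1` resp. `δ_p(α,∅)·1`.) -/
def SatisfiesRel {A : Type*} [Ring A] {n : ℕ} (u : Fin n → Fin n → A)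
    {k l : ℕ} (p : Partition k l) : Prop :=
  ∀ (α : Fin k → Fin n) (β : Fin l → Fin n),
    (∑ γ : Fin k → Fin n,
      if labelsMatch p γ β then (List.ofFn fun s => u (γ s) (α s)).prod else 0)
    = ∑ γ' : Fin l → Fin n,
      if labelsMatch p α γ' then (List.ofFn fun t => u (β t) (γ' t)).prod else 0

/-- The disjoint union of two set partitions. -/
def sumPartition {X Y : Type*} (p : Setoid X) (q : Setoid Y) : Setoid (X ⊕ Y) where
  r := Sum.LiftRel p.r q.r
  iseqv := by
    refine ⟨fun a => ?_, fun {a b} h => ?_, fun {a b c} h₁ h₂ => ?_⟩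
    · cases a with
      | inl x => exact Sum.LiftRel.inl (p.iseqv.refl x)
      | inr y => exact Sum.LiftRel.inr (q.iseqv.refl y)
    · cases h with
      | inl h => exact Sum.LiftRel.inl (p.iseqv.symm h)
      | inr h => exact Sum.LiftRel.inr (q.iseqv.symm h)
    · cases h₁ with
      | inl h₁ =>
        cases h₂ with
        | inl h₂ => exact Sum.LiftRel.inl (p.iseqv.trans h₁ h₂)
      | inr h₁ =>
        cases h₂ with
        | inr h₂ => exact Sum.LiftRel.inr (q.iseqv.trans h₁ h₂)

/-- Reindexing equivalence for the tensor product of partitions. -/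
def tensorEquiv (k l k' l' : ℕ) :
    (Fin (k + k') ⊕ Fin (l + l')) ≃ ((Fin k ⊕ Fin l) ⊕ (Fin k' ⊕ Fin l')) :=
  (Equiv.sumCongr finSumFinEquiv.symm finSumFinEquiv.symm).trans
    (Equiv.sumSumSumComm (Fin k) (Fin k') (Fin l) (Fin l'))

/-- The tensor product `p ⊗ q` of two partitions: horizontal concatenation,
blocks kept separate. -/
def tensor {k l k' l' : ℕ} (p : Partition k l) (q : Partition k' l') :
    Partition (k + k') (l + l') :=
  Setoid.comap (tensorEquiv k l k' l') (sumPartition p q)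

/-- The join of `p ∈ P(k,l)` and `q ∈ P(l,m)` on the `k` upper, `l` middle and
`m` lower points, identifying the lower points of `p` with the upper points of `q`. -/
def compJoin {k l m : ℕ} (q : Partition l m) (p : Partition k l) :
    Setoid (Fin k ⊕ (Fin l ⊕ Fin m)) :=
  (Setoid.comap (Equiv.sumAssoc (Fin k) (Fin l) (Fin m)).symm
      (sumPartition p (⊥ : Setoid (Fin m))))
    ⊔ sumPartition (⊥ : Setoid (Fin k)) q

/-- The composition `qp ∈ P(k,m)` of `q ∈ P(l,m)` below `p ∈ P(k,l)`: restriction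
of the join to the upper and lower points. -/
def comp {k l m : ℕ} (q : Partition l m) (p : Partition k l) : Partition k m :=
  Setoid.comap (Sum.map id Sum.inr : Fin k ⊕ Fin m → Fin k ⊕ (Fin l ⊕ Fin m))
    (compJoin q p)

/-- Middle points in the composition procedure. -/
def IsMiddle {k l m : ℕ} : Fin k ⊕ (Fin l ⊕ Fin m) → Prop
  | Sum.inr (Sum.inl _) => True
  | _ => False

/-- `rl q p`: the number of removed loops in the composition of `q` and `p`, i.e. the
number of blocks of the join consisting entirely of middle points. -/
noncomputable def rl {k l m : ℕ} (q : Partition l m) (p : Partition k l) : ℕ :=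
  Nat.card {c : Quotient (compJoin q p) //
    ∀ x : Fin k ⊕ (Fin l ⊕ Fin m), Quotient.mk (compJoin q p) x = c → IsMiddle x}

/-- The involution `p* ∈ P(l,k)`: turning `p ∈ P(k,l)` upside down. -/
def involution {k l : ℕ} (p : Partition k l) : Partition l k :=
  Setoid.comap (Equiv.sumComm (Fin l) (Fin k)) p

/-- The vertical reflection `p̃ ∈ P(k,l)`: reflecting `p` at the vertical axis. -/
def reflect {k l : ℕ} (p : Partition k l) : Partition k l :=
  Setoid.comap (Sum.map Fin.rev Fin.rev) p

/-- The setoid relating `x` and `y` (and nothing else besides equality). -/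
def pairSetoid {X : Type*} (x y : X) : Setoid X where
  r a b := a = b ∨ (a = x ∧ b = y) ∨ (a = y ∧ b = x)
  iseqv := by
    refine ⟨fun a => Or.inl rfl, fun {a b} h => ?_, fun {a b c} h₁ h₂ => ?_⟩
    · rcases h with rfl | ⟨ha, hb⟩ | ⟨ha, hb⟩
      · exact Or.inl rfl
      · exact Or.inr (Or.inr ⟨hb, ha⟩)
      · exact Or.inr (Or.inl ⟨hb, ha⟩)
    · rcases h₁ with rfl | h₁
      · exact h₂
      · rcases h₂ with rfl | h₂
        · exact Or.inr h₁
        · rcases h₁ with ⟨ha, hb⟩ | ⟨ha, hb⟩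
          · rcases h₂ with ⟨hb', hc⟩ | ⟨hb', hc⟩
            · exact Or.inr (Or.inl ⟨ha, hc⟩)
            · exact Or.inl (ha.trans hc.symm)
          · rcases h₂ with ⟨hb', hc⟩ | ⟨hb', hc⟩
            · exact Or.inl (ha.trans hc.symm)
            · exact Or.inr (Or.inr ⟨ha, hc⟩)

/-- Connecting (merging) the blocks of the points `x` and `y` of a partition. -/
def mergeBlocks {X : Type*} (p : Setoid X) (x y : X) : Setoid X :=
  p ⊔ pairSetoid x y

/-- Disconnecting the point `x` from its block and turning it into a singleton block. -/
def disconnect {X : Type*} (p : Setoid X) (x : X) : Setoid X where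
  r a b := a = b ∨ (p.r a b ∧ a ≠ x ∧ b ≠ x)
  iseqv := by
    refine ⟨fun a => Or.inl rfl, fun {a b} h => ?_, fun {a b c} h₁ h₂ => ?_⟩
    · rcases h with rfl | ⟨h, ha, hb⟩
      · exact Or.inl rfl
      · exact Or.inr ⟨p.iseqv.symm h, hb, ha⟩
    · rcases h₁ with rfl | ⟨h₁, ha, hb⟩
      · exact h₂
      · rcases h₂ with rfl | ⟨h₂, hb', hc⟩
        · exact Or.inr ⟨h₁, ha, hb⟩
        · exact Or.inr ⟨p.iseqv.trans h₁ h₂, ha, hc⟩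

/-- The partition of the lower points induced by `p ∈ P(0,l)`. -/
def lowerSetoid {l : ℕ} (p : Partition 0 l) : Setoid (Fin l) :=
  Setoid.comap Sum.inr p

/-- The reindexing map for inserting `m` points after position `t` among `l` points. -/
def insertMap (l m t : ℕ) (ht : t ≤ l) : Fin (l + m) → Fin l ⊕ Fin m := fun i =>
  if h1 : (i : ℕ) < t then Sum.inl ⟨i, lt_of_lt_of_le h1 ht⟩
  else if h2 : (i : ℕ) < t + m then Sum.inr ⟨(i : ℕ) - t, by omega⟩
  else Sum.inl ⟨(i : ℕ) - m, by have := i.isLt; omega⟩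

/-- The partition in `P(0, l+m)` obtained from `p ∈ P(0,l)` by inserting `q ∈ P(0,m)`
after the `t`-th lower point of `p` (blocks of `p` and `q` kept separate). -/
def insertAt {l m : ℕ} (p : Partition 0 l) (q : Partition 0 m) (t : ℕ) (ht : t ≤ l) :
    Partition 0 (l + m) :=
  Setoid.comap (Sum.elim (fun a : Fin 0 => a.elim0) (insertMap l m t ht))
    (sumPartition (lowerSetoid p) (lowerSetoid q))

/-- The reindexing map for the rotation moving the leftmost upper point to the
leftmost lower position. -/
def rotateMap (k l : ℕ) : Fin k ⊕ Fin (l + 1) → Fin (k + 1) ⊕ Fin l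
  | Sum.inl a => Sum.inl a.succ
  | Sum.inr b => Fin.cases (Sum.inl (0 : Fin (k + 1))) (fun b' => Sum.inr b') b

/-- The rotated version of `p ∈ P(k+1, l)`: the leftmost upper point becomes the new
leftmost lower point (staying in its block). -/
def rotate {k l : ℕ} (p : Partition (k + 1) l) : Partition k (l + 1) :=
  Setoid.comap (rotateMap k l) p

/-- The embedding of the remaining points after erasing the lower points `j` and `j+1`. -/
def eraseMap (k l j : ℕ) : Fin k ⊕ Fin l → Fin k ⊕ Fin (l + 2) :=
  Sum.map id fun b =>
    if (b : ℕ) < j then ⟨(b : ℕ), by have := b.isLt; omega⟩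
    else ⟨(b : ℕ) + 2, by have := b.isLt; omega⟩

/-- The partition in `P(k,l)` obtained from `p ∈ P(k,l+2)` by connecting the blocks of
the `j`-th and `(j+1)`-th lower points and then erasing those two points. -/
def erasePair {k l : ℕ} (p : Partition k (l + 2)) (j : Fin (l + 1)) : Partition k l :=
  Setoid.comap (eraseMap k l j)
    (mergeBlocks p (Sum.inr ⟨(j : ℕ), by have := j.isLt; omega⟩)
      (Sum.inr ⟨(j : ℕ) + 1, by have := j.isLt; omega⟩))

/-- The non-unital relations `R(p)` relative to a projection `P₀`:
`P₀·∑_γ δ_p(γ,β) u_{γ₁α₁}⋯u_{γₖαₖ} = (∑_{γ'} δ_p(α,γ') u_{β₁γ'₁}⋯u_{β_lγ'_l})·P₀`,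
with the conventions `δ_p(∅,β)·P₀` resp. `δ_p(α,∅)·P₀` for `k = 0` resp. `l = 0`. -/
def SatisfiesRelNU {A : Type*} [NonUnitalRing A] {n : ℕ} (P₀ : A)
    (u : Fin n → Fin n → A) {k l : ℕ} (p : Partition k l) : Prop :=
  ∀ (α : Fin k → Fin n) (β : Fin l → Fin n),
    (∑ γ : Fin k → Fin n,
      if labelsMatch p γ β then
        (List.ofFn fun s => u (γ s) (α s)).foldl (· * ·) P₀ else 0)
    = ∑ γ' : Fin l → Fin n,
      if labelsMatch p α γ' then
        (List.ofFn fun t => u (β t) (γ' t)).foldr (· * ·) P₀ else 0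

section Aux

variable {n k l m : ℕ}

/-- The full labeling of the three rows of points. -/
def F (α : Fin k → Fin n) (β : Fin m → Fin n) (ζ : Fin l → Fin n) :
    Fin k ⊕ (Fin l ⊕ Fin m) → Fin n :=
  Sum.elim α (Sum.elim ζ β)

lemma F_emb (α : Fin k → Fin n) (β : Fin m → Fin n) (ζ : Fin l → Fin n)
    (a : Fin k ⊕ Fin m) :
    F α β ζ (Sum.map id Sum.inr a) = Sum.elim α β a := by
  cases a <;> rfl

lemma goodIff (p : Partition k l) (q : Partition l m)
    (α : Fin k → Fin n) (β : Fin m → Fin n) (ζ : Fin l → Fin n) :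
    (labelsMatch p α ζ ∧ labelsMatch q ζ β) ↔
      ∀ x y, (compJoin q p).r x y → F α β ζ x = F α β ζ y := by
  have hFl : ∀ w : Fin k ⊕ Fin l,
      F α β ζ ((Equiv.sumAssoc (Fin k) (Fin l) (Fin m)) (Sum.inl w)) = Sum.elim α ζ w := by
    intro w; cases w <;> rfl
  have key : (∀ x y, (compJoin q p).r x y → F α β ζ x = F α β ζ y) ↔
      compJoin q p ≤ Setoid.ker (F α β ζ) := by
    constructor
    · intro h; rw [Setoid.le_def]; intro x y hxy; exact h x y hxy
    · intro h x y hxy; exact Setoid.le_def.mp h hxy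
  rw [key, compJoin, sup_le_iff]
  constructor
  · rintro ⟨h1, h2⟩
    constructor
    · rw [Setoid.le_def]
      intro x y hxy
      rw [Setoid.comap_rel] at hxy
      have hx := (Equiv.apply_symm_apply (Equiv.sumAssoc (Fin k) (Fin l) (Fin m)) x).symm
      have hy := (Equiv.apply_symm_apply (Equiv.sumAssoc (Fin k) (Fin l) (Fin m)) y).symm
      rw [Setoid.ker_def, hx, hy]
      generalize (Equiv.sumAssoc (Fin k) (Fin l) (Fin m)).symm x = u at hxy
      generalize (Equiv.sumAssoc (Fin k) (Fin l) (Fin m)).symm y = v at hxy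
      cases hxy with
      | inl h => rw [hFl, hFl]; exact h1 _ _ h
      | inr h =>
          have : _ = _ := h
          subst this; rfl
    · rw [Setoid.le_def]
      intro x y hxy
      cases hxy with
      | inl h =>
          have : _ = _ := h
          subst this
          rw [Setoid.ker_def]
      | inr h =>
          have hw : ∀ v : Fin l ⊕ Fin m, F α β ζ (Sum.inr v) = Sum.elim ζ β v := by
            intro v; cases v <;> rfl
          rw [Setoid.ker_def, hw, hw]
          exact h2 _ _ h
  · rintro ⟨h1, h2⟩
    constructor
    · intro u v huv
      have hr : (Setoid.comap (Equiv.sumAssoc (Fin k) (Fin l) (Fin m)).symm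
          (sumPartition p (⊥ : Setoid (Fin m))))
            ((Equiv.sumAssoc (Fin k) (Fin l) (Fin m)) (Sum.inl u))
            ((Equiv.sumAssoc (Fin k) (Fin l) (Fin m)) (Sum.inl v)) := by
        rw [Setoid.comap_rel, Equiv.symm_apply_apply, Equiv.symm_apply_apply]
        exact Sum.LiftRel.inl huv
      have := Setoid.le_def.mp h1 hr
      rw [Setoid.ker_def, hFl, hFl] at this
      exact this
    · intro u v huv
      have hr : (sumPartition (⊥ : Setoid (Fin k)) q) (Sum.inr u) (Sum.inr v) :=
        Sum.LiftRel.inr huv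
      have := Setoid.le_def.mp h2 hr
      have hw : ∀ v : Fin l ⊕ Fin m, F α β ζ (Sum.inr v) = Sum.elim ζ β v := by
        intro v; cases v <;> rfl
      rw [Setoid.ker_def, hw, hw] at this
      exact this

lemma comp_rel_iff (p : Partition k l) (q : Partition l m) (a b : Fin k ⊕ Fin m) :
    (comp q p).r a b ↔ (compJoin q p).r (Sum.map id Sum.inr a) (Sum.map id Sum.inr b) :=
  Setoid.comap_rel _ _ _ _

lemma good_imp (p : Partition k l) (q : Partition l m)
    (α : Fin k → Fin n) (β : Fin m → Fin n) (ζ : Fin l → Fin n)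
    (hζ : labelsMatch p α ζ ∧ labelsMatch q ζ β) :
    labelsMatch (comp q p) α β := by
  intro a b hab
  rw [comp_rel_iff] at hab
  have := (goodIff p q α β ζ).mp hζ _ _ hab
  rwa [F_emb, F_emb] at this

lemma nonMid_emb {x : Fin k ⊕ (Fin l ⊕ Fin m)} (hx : ¬ IsMiddle x) :
    ∃ a : Fin k ⊕ Fin m, Sum.map id Sum.inr a = x := by
  match x with
  | Sum.inl a => exact ⟨Sum.inl a, rfl⟩
  | Sum.inr (Sum.inr c) => exact ⟨Sum.inr c, rfl⟩
  | Sum.inr (Sum.inl b) => exact absurd trivial hx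

/-- Boundary labels: labels of non-middle points. -/
def bl (d : Fin n) (α : Fin k → Fin n) (β : Fin m → Fin n) :
    Fin k ⊕ (Fin l ⊕ Fin m) → Fin n
  | Sum.inl a => α a
  | Sum.inr (Sum.inr c) => β c
  | Sum.inr (Sum.inl _) => d

lemma bl_emb (d : Fin n) (α : Fin k → Fin n) (β : Fin m → Fin n) (a : Fin k ⊕ Fin m) :
    bl (l := l) d α β (Sum.map id Sum.inr a) = Sum.elim α β a := by
  cases a <;> rfl

lemma bl_eq_of_rel {p : Partition k l} {q : Partition l m}
    {α : Fin k → Fin n} {β : Fin m → Fin n} (d : Fin n)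
    (H : labelsMatch (comp q p) α β) {x y : Fin k ⊕ (Fin l ⊕ Fin m)}
    (hx : ¬ IsMiddle x) (hy : ¬ IsMiddle y) (hxy : (compJoin q p).r x y) :
    bl d α β x = bl d α β y := by
  obtain ⟨a, rfl⟩ := nonMid_emb hx
  obtain ⟨b, rfl⟩ := nonMid_emb hy
  rw [bl_emb, bl_emb]
  exact H a b ((comp_rel_iff p q a b).mpr hxy)

lemma F_eq_bl (d : Fin n) (α : Fin k → Fin n) (β : Fin m → Fin n) (ζ : Fin l → Fin n)
    {x : Fin k ⊕ (Fin l ⊕ Fin m)} (hx : ¬ IsMiddle x) :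
    F α β ζ x = bl d α β x := by
  match x with
  | Sum.inl a => rfl
  | Sum.inr (Sum.inr c) => rfl
  | Sum.inr (Sum.inl b) => exact absurd trivial hx

lemma exists_nonMid (p : Partition k l) (q : Partition l m)
    (c : Quotient (compJoin q p))
    (h : ¬ ∀ x, Quotient.mk (compJoin q p) x = c → IsMiddle x) :
    ∃ x, Quotient.mk (compJoin q p) x = c ∧ ¬ IsMiddle x := by
  push_neg at h; exact h

/-- The common label of a block, given labels `g` of the all-middle blocks. -/
noncomputable def labelOf (p : Partition k l) (q : Partition l m)
    (d : Fin n) (α : Fin k → Fin n) (β : Fin m → Fin n)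
    (g : {c : Quotient (compJoin q p) //
        ∀ x : Fin k ⊕ (Fin l ⊕ Fin m), Quotient.mk (compJoin q p) x = c → IsMiddle x}
      → Fin n)
    (c : Quotient (compJoin q p)) : Fin n :=
  if h : ∀ x : Fin k ⊕ (Fin l ⊕ Fin m), Quotient.mk (compJoin q p) x = c → IsMiddle x then
    g ⟨c, h⟩
  else bl d α β (exists_nonMid p q c h).choose

lemma exists_midPoint (p : Partition k l) (q : Partition l m)
    (c : {c : Quotient (compJoin q p) //
        ∀ x : Fin k ⊕ (Fin l ⊕ Fin m), Quotient.mk (compJoin q p) x = c → IsMiddle x}) :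
    ∃ b : Fin l, Quotient.mk (compJoin q p) (Sum.inr (Sum.inl b)) = c.1 := by
  obtain ⟨x, hx⟩ := Quotient.exists_rep c.1
  have hm := c.2 x hx
  match x, hm with
  | Sum.inr (Sum.inl b), _ => exact ⟨b, hx⟩
  | Sum.inl a, hm => exact hm.elim
  | Sum.inr (Sum.inr e), hm => exact hm.elim

/-- A choice of middle point in an all-middle block. -/
noncomputable def midPoint (p : Partition k l) (q : Partition l m)
    (c : {c : Quotient (compJoin q p) //
        ∀ x : Fin k ⊕ (Fin l ⊕ Fin m), Quotient.mk (compJoin q p) x = c → IsMiddle x}) :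
    Fin l :=
  (exists_midPoint p q c).choose

lemma midPoint_spec (p : Partition k l) (q : Partition l m)
    (c : {c : Quotient (compJoin q p) //
        ∀ x : Fin k ⊕ (Fin l ⊕ Fin m), Quotient.mk (compJoin q p) x = c → IsMiddle x}) :
    Quotient.mk (compJoin q p) (Sum.inr (Sum.inl (midPoint p q c))) = c.1 :=
  (exists_midPoint p q c).choose_spec

lemma F_labelOf (p : Partition k l) (q : Partition l m)
    (d : Fin n) (α : Fin k → Fin n) (β : Fin m → Fin n)
    (H : labelsMatch (comp q p) α β)
    (g : {c : Quotient (compJoin q p) //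
        ∀ x : Fin k ⊕ (Fin l ⊕ Fin m), Quotient.mk (compJoin q p) x = c → IsMiddle x}
      → Fin n)
    (x : Fin k ⊕ (Fin l ⊕ Fin m)) :
    F α β (fun b => labelOf p q d α β g (Quotient.mk (compJoin q p) (Sum.inr (Sum.inl b)))) x
      = labelOf p q d α β g (Quotient.mk (compJoin q p) x) := by
  by_cases hx : IsMiddle x
  · match x, hx with
    | Sum.inr (Sum.inl b), _ => rfl
  · rw [F_eq_bl d α β _ hx, labelOf,
      dif_neg (show ¬ _ from fun h => hx (h x rfl))]
    obtain ⟨hy1, hy2⟩ := (exists_nonMid p q (Quotient.mk (compJoin q p) x)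
      (fun h => hx (h x rfl))).choose_spec
    exact (bl_eq_of_rel d H hy2 hx (Quotient.exact hy1)).symm

/-- The key bijection between matching middle labelings and labelings of
the all-middle blocks. -/
noncomputable def theEquiv (p : Partition k l) (q : Partition l m)
    (d : Fin n) (α : Fin k → Fin n) (β : Fin m → Fin n)
    (H : labelsMatch (comp q p) α β) :
    {ζ : Fin l → Fin n // labelsMatch p α ζ ∧ labelsMatch q ζ β} ≃
      ({c : Quotient (compJoin q p) //
        ∀ x : Fin k ⊕ (Fin l ⊕ Fin m), Quotient.mk (compJoin q p) x = c → IsMiddle x}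
        → Fin n) where
  toFun ζ c := ζ.1 (midPoint p q c)
  invFun g := ⟨fun b => labelOf p q d α β g (Quotient.mk (compJoin q p) (Sum.inr (Sum.inl b))),
    by
      rw [goodIff]
      intro x y hxy
      rw [F_labelOf p q d α β H g, F_labelOf p q d α β H g, Quotient.sound hxy]⟩
  left_inv := by
    rintro ⟨ζ, hζ⟩
    apply Subtype.ext
    funext b
    show labelOf p q d α β (fun c => ζ (midPoint p q c))
      (Quotient.mk (compJoin q p) (Sum.inr (Sum.inl b))) = ζ b
    rw [labelOf]
    split
    · rename_i h
      have hb := midPoint_spec p q ⟨Quotient.mk (compJoin q p) (Sum.inr (Sum.inl b)), h⟩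
      have hrel : (compJoin q p) (Sum.inr (Sum.inl (midPoint p q ⟨_, h⟩))) (Sum.inr (Sum.inl b)) :=
        Quotient.exact hb
      have := (goodIff p q α β ζ).mp hζ _ _ hrel
      exact this
    · rename_i h
      obtain ⟨hy1, hy2⟩ := (exists_nonMid p q _ h).choose_spec
      have hrel : (compJoin q p) (exists_nonMid p q _ h).choose (Sum.inr (Sum.inl b)) :=
        Quotient.exact hy1
      have := (goodIff p q α β ζ).mp hζ _ _ hrel
      rw [F_eq_bl d α β ζ hy2] at this
      exact this
  right_inv := by
    intro g
    funext c
    show labelOf p q d α β g (Quotient.mk (compJoin q p) (Sum.inr (Sum.inl (midPoint p q c)))) = g c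
    rw [midPoint_spec p q c, labelOf, dif_pos c.2]

end Aux

/-- The composition formula
`∑_ζ δ_p(α,ζ)·δ_q(ζ,β) = n^{rl(q,p)}·δ_{qp}(α,β)`; in particular `δ_{qp}(α,β) = 1`
iff there exists `ζ` with `δ_p(α,ζ) = 1` and `δ_q(ζ,β) = 1`. -/
theorem delta_comp {n k l m : ℕ} (hn : 0 < n) (p : Partition k l) (q : Partition l m)
    (α : Fin k → Fin n) (β : Fin m → Fin n) :
    (∑ ζ : Fin l → Fin n, delta p α ζ * delta q ζ β)
      = n ^ rl q p * delta (comp q p) α β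
    ∧ (delta (comp q p) α β = 1 ↔
        ∃ ζ : Fin l → Fin n, delta p α ζ = 1 ∧ delta q ζ β = 1) := by
  classical
  set d : Fin n := ⟨0, hn⟩ with hd
  have hsum : (∑ ζ : Fin l → Fin n, delta p α ζ * delta q ζ β)
      = Nat.card {ζ : Fin l → Fin n // labelsMatch p α ζ ∧ labelsMatch q ζ β} := by
    rw [Nat.card_eq_fintype_card, Fintype.card_subtype, Finset.card_filter]
    refine (Finset.sum_congr rfl fun ζ _ => ?_).symm
    by_cases h1 : labelsMatch p α ζ <;> by_cases h2 : labelsMatch q ζ β <;>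
      simp [delta, h1, h2]
  by_cases H : labelsMatch (comp q p) α β
  · have hcard : Nat.card {ζ : Fin l → Fin n // labelsMatch p α ζ ∧ labelsMatch q ζ β}
        = n ^ rl q p := by
      rw [Nat.card_congr (theEquiv p q d α β H), Nat.card_fun, Nat.card_eq_fintype_card,
        Fintype.card_fin]
      rfl
    constructor
    · rw [hsum, hcard, delta, if_pos H, mul_one]
    · constructor
      · intro _
        refine ⟨((theEquiv p q d α β H).symm (fun _ => d)).1, ?_, ?_⟩
        · rw [delta, if_pos (((theEquiv p q d α β H).symm (fun _ => d)).2.1)]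
        · rw [delta, if_pos (((theEquiv p q d α β H).symm (fun _ => d)).2.2)]
      · intro _
        rw [delta, if_pos H]
  · have hempty : IsEmpty {ζ : Fin l → Fin n // labelsMatch p α ζ ∧ labelsMatch q ζ β} :=
      ⟨fun ζ => H (good_imp p q α β ζ.1 ζ.2)⟩
    constructor
    · rw [hsum, Nat.card_of_isEmpty, delta, if_neg H, mul_zero]
    · constructor
      · intro h
        rw [delta, if_neg H] at h
        exact absurd h (by norm_num)
      · rintro ⟨ζ, h1, h2⟩
        have g1 : labelsMatch p α ζ := by
          by_contra hc; rw [delta, if_neg hc] at h1; exact absurd h1 (by norm_num)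
        have g2 : labelsMatch q ζ β := by
          by_contra hc; rw [delta, if_neg hc] at h2; exact absurd h2 (by norm_num)
        exact absurd (good_imp p q α β ζ ⟨g1, g2⟩) H

end PartitionCstar
end

section
/- (Theorem 2.9(b)) Let A be a unital C*-algebra and u_{ij} ∈ A (1 ≤ i,j ≤ n) be self-adjoint. Let p ∈ P(k,l) and q ∈ P(k',l') be partitions. If the relations R(p) and R(q) hold for the u_{ij}, then the relations R(p⊗q) hold, where p⊗q ∈ P(k+k', l+l') is the tensor product (horizontal concatenation) of p and q. -/
/-!
A labelling of the points of `p ⊗ q` is a pair of labellings of the points of `p` and of `q`,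
`δ_{p⊗q}` is the product `δ_p δ_q`, and each monomial of `R(p⊗q)` is the ordered product of a
monomial for `p` and one for `q`. Hence each side of `R(p⊗q)` is the product of the
corresponding sides of `R(p)` and `R(q)`.
-/

open scoped Classical

namespace PartitionCstar

theorem forall_liftRel_imp_sumElim_eq {X Y Z : Type*} (r : X → X → Prop) (s : Y → Y → Prop)
    (f : X → Z) (g : Y → Z) :
    (∀ a b, Sum.LiftRel r s a b → Sum.elim f g a = Sum.elim f g b) ↔
      (∀ a b, r a b → f a = f b) ∧ (∀ a b, s a b → g a = g b) := by
  refine ⟨fun h => ⟨fun a b hab => h _ _ (.inl hab), fun a b hab => h _ _ (.inr hab)⟩, ?_⟩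
  rintro ⟨hr, hs⟩ _ _ (⟨hab⟩ | ⟨hab⟩)
  exacts [hr _ _ hab, hs _ _ hab]

theorem sumElim_append_eq_comp_tensorEquiv {X : Type*} {k l k' l' : ℕ}
    (α₁ : Fin k → X) (α₂ : Fin k' → X) (β₁ : Fin l → X) (β₂ : Fin l' → X) :
    Sum.elim (Fin.append α₁ α₂) (Fin.append β₁ β₂) =
      Sum.elim (Sum.elim α₁ β₁) (Sum.elim α₂ β₂) ∘ tensorEquiv k l k' l' := by
  ext (x | x) <;> refine Fin.addCases (fun i => ?_) (fun i => ?_) x <;>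
    simp [tensorEquiv, Equiv.sumSumSumComm]

theorem labelsMatch_tensor_append {n k l k' l' : ℕ} (p : Partition k l) (q : Partition k' l')
    (α₁ : Fin k → Fin n) (α₂ : Fin k' → Fin n) (β₁ : Fin l → Fin n) (β₂ : Fin l' → Fin n) :
    labelsMatch (tensor p q) (Fin.append α₁ α₂) (Fin.append β₁ β₂) ↔
      labelsMatch p α₁ β₁ ∧ labelsMatch q α₂ β₂ := by
  rw [labelsMatch, labelsMatch, labelsMatch, sumElim_append_eq_comp_tensorEquiv,
    ← forall_liftRel_imp_sumElim_eq]
  exact (tensorEquiv k l k' l').forall_congr fun {_} => (tensorEquiv k l k' l').forall_congr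
    fun {_} => Iff.rfl

theorem ofFn_append_append {X Y A : Type*} {m m' : ℕ} (f : X → Y → A)
    (a₁ : Fin m → X) (a₂ : Fin m' → X) (b₁ : Fin m → Y) (b₂ : Fin m' → Y) :
    List.ofFn (fun s => f (Fin.append a₁ a₂ s) (Fin.append b₁ b₂ s)) =
      List.ofFn (fun s => f (a₁ s) (b₁ s)) ++ List.ofFn (fun s => f (a₂ s) (b₂ s)) := by
  simp [List.ofFn_add]

theorem sum_fun_fin_add {X M : Type*} [Fintype X] [AddCommMonoid M] {m m' : ℕ}
    (F : (Fin (m + m') → X) → M) :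
    ∑ γ, F γ = ∑ γ₁ : Fin m → X, ∑ γ₂ : Fin m' → X, F (Fin.append γ₁ γ₂) := by
  rw [← (Fin.appendEquiv m m').sum_comp, Fintype.sum_prod_type]
  rfl

noncomputable section Sums

variable {A : Type*} [Ring A] {n : ℕ} (u : Fin n → Fin n → A)

def upperSum {k l : ℕ} (p : Partition k l) (α : Fin k → Fin n) (β : Fin l → Fin n) : A :=
  ∑ γ : Fin k → Fin n, if labelsMatch p γ β then (List.ofFn fun s => u (γ s) (α s)).prod else 0

def lowerSum {k l : ℕ} (p : Partition k l) (α : Fin k → Fin n) (β : Fin l → Fin n) : A :=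
  ∑ γ' : Fin l → Fin n,
    if labelsMatch p α γ' then (List.ofFn fun t => u (β t) (γ' t)).prod else 0

theorem satisfiesRel_iff {k l : ℕ} (p : Partition k l) :
    SatisfiesRel u p ↔ ∀ α β, upperSum u p α β = lowerSum u p α β :=
  Iff.rfl

variable {k l k' l' : ℕ} (p : Partition k l) (q : Partition k' l')
  (α₁ : Fin k → Fin n) (α₂ : Fin k' → Fin n) (β₁ : Fin l → Fin n) (β₂ : Fin l' → Fin n)

theorem upperSum_tensor :
    upperSum u (tensor p q) (Fin.append α₁ α₂) (Fin.append β₁ β₂) =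
      upperSum u p α₁ β₁ * upperSum u q α₂ β₂ := by
  rw [upperSum, upperSum, upperSum, Finset.sum_mul_sum, sum_fun_fin_add]
  refine Finset.sum_congr rfl fun γ₁ _ => Finset.sum_congr rfl fun γ₂ _ => ?_
  simp only [labelsMatch_tensor_append, ofFn_append_append, List.prod_append,
    ite_zero_mul_ite_zero]

theorem lowerSum_tensor :
    lowerSum u (tensor p q) (Fin.append α₁ α₂) (Fin.append β₁ β₂) =
      lowerSum u p α₁ β₁ * lowerSum u q α₂ β₂ := by
  rw [lowerSum, lowerSum, lowerSum, Finset.sum_mul_sum, sum_fun_fin_add]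
  refine Finset.sum_congr rfl fun γ₁ _ => Finset.sum_congr rfl fun γ₂ _ => ?_
  simp only [labelsMatch_tensor_append, ofFn_append_append, List.prod_append,
    ite_zero_mul_ite_zero]

end Sums

theorem satisfiesRel_tensor_general {A : Type*} [CStarAlgebra A] {n : ℕ}
    (u : Fin n → Fin n → A)
    {k l k' l' : ℕ} (p : Partition k l) (q : Partition k' l')
    (hp : SatisfiesRel u p) (hq : SatisfiesRel u q) :
    SatisfiesRel u (tensor p q) := by
  rw [satisfiesRel_iff] at hp hq ⊢
  intro α β
  rw [← Fin.append_castAdd_natAdd (f := α), ← Fin.append_castAdd_natAdd (f := β),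
    upperSum_tensor, lowerSum_tensor, hp, hq]

/-- Theorem 2.9(b): if the relations `R(p)` and `R(q)` hold for the self-adjoint
generators `u_{ij}`, then so do the relations `R(p⊗q)`. -/
theorem satisfiesRel_tensor {A : Type*} [CStarAlgebra A] {n : ℕ}
    (u : Fin n → Fin n → A) (hsa : ∀ i j, IsSelfAdjoint (u i j))
    {k l k' l' : ℕ} (p : Partition k l) (q : Partition k' l')
    (hp : SatisfiesRel u p) (hq : SatisfiesRel u q) :
    SatisfiesRel u (tensor p q) :=
  satisfiesRel_tensor_general u p q hp hq

end PartitionCstar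
end

section
/- (Theorem 2.9(c)) Let A be a unital C*-algebra and u_{ij} ∈ A (1 ≤ i,j ≤ n) be self-adjoint. Let p ∈ P(k,l) and q ∈ P(l,m) be partitions. If the relations R(p) and R(q) hold for the u_{ij}, then the relations R(qp) hold, where qp ∈ P(k,m) is the composition of q and p. -/
open scoped Classical

namespace PartitionCstar

section Aux

variable {n k l m : ℕ}

/-- Embedding of the points of `p` into the join. -/
def ιP {k l m : ℕ} : Fin k ⊕ Fin l → Fin k ⊕ (Fin l ⊕ Fin m) :=
  Sum.elim Sum.inl (fun b => Sum.inr (Sum.inl b))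

/-- Embedding of the boundary points into the join. -/
def embB {k l m : ℕ} : Fin k ⊕ Fin m → Fin k ⊕ (Fin l ⊕ Fin m) :=
  Sum.map id Sum.inr

lemma compJoin_of_p (p : Partition k l) (q : Partition l m) {x y : Fin k ⊕ Fin l}
    (h : p.r x y) : (compJoin q p).r (ιP (m := m) x) (ιP y) := by
  have hle : (Setoid.comap (Equiv.sumAssoc (Fin k) (Fin l) (Fin m)).symm
      (sumPartition p (⊥ : Setoid (Fin m)))) ≤ compJoin q p := le_sup_left
  apply hle
  show (sumPartition p (⊥ : Setoid (Fin m))).r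
    ((Equiv.sumAssoc (Fin k) (Fin l) (Fin m)).symm (ιP x)) _
  have hx : ∀ z : Fin k ⊕ Fin l,
      (Equiv.sumAssoc (Fin k) (Fin l) (Fin m)).symm (ιP z) = Sum.inl z := by
    rintro (a | b) <;> rfl
  rw [hx, hx]
  exact Sum.LiftRel.inl h

lemma compJoin_of_q (p : Partition k l) (q : Partition l m) {x y : Fin l ⊕ Fin m}
    (h : q.r x y) : (compJoin q p).r (Sum.inr x) (Sum.inr y) := by
  have hle : sumPartition (⊥ : Setoid (Fin k)) q ≤ compJoin q p := le_sup_right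
  exact hle (Sum.LiftRel.inr h)

lemma comp_r (p : Partition k l) (q : Partition l m) {z z' : Fin k ⊕ Fin m} :
    (comp q p).r z z' ↔ (compJoin q p).r (embB z) (embB z') := Iff.rfl

lemma labelsMatch_join (p : Partition k l) (q : Partition l m)
    {α : Fin k → Fin n} {ζ : Fin l → Fin n} {β : Fin m → Fin n}
    (h1 : labelsMatch p α ζ) (h2 : labelsMatch q ζ β) :
    ∀ x y, (compJoin q p).r x y →
      Sum.elim α (Sum.elim ζ β) x = Sum.elim α (Sum.elim ζ β) y := by
  set f : Fin k ⊕ (Fin l ⊕ Fin m) → Fin n := Sum.elim α (Sum.elim ζ β) with hf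
  have hle : compJoin q p ≤ Setoid.ker f := by
    apply sup_le
    · intro x y hxy
      obtain ⟨x', rfl⟩ := (Equiv.sumAssoc (Fin k) (Fin l) (Fin m)).surjective x
      obtain ⟨y', rfl⟩ := (Equiv.sumAssoc (Fin k) (Fin l) (Fin m)).surjective y
      have hxy' : (sumPartition p (⊥ : Setoid (Fin m))).r x' y' := by
        have h0 : (sumPartition p (⊥ : Setoid (Fin m))).r
            ((Equiv.sumAssoc (Fin k) (Fin l) (Fin m)).symm
              ((Equiv.sumAssoc (Fin k) (Fin l) (Fin m)) x'))
            ((Equiv.sumAssoc (Fin k) (Fin l) (Fin m)).symm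
              ((Equiv.sumAssoc (Fin k) (Fin l) (Fin m)) y')) := hxy
        simpa using h0
      show f _ = f _
      cases hxy' with
      | inl h =>
        have := h1 _ _ h
        rename_i a b
        rcases a with a | a <;> rcases b with b | b <;> simpa [f] using this
      | inr h =>
        have : _ = _ := h
        subst this
        rfl
    · intro x y hxy
      cases hxy with
      | inl h =>
        have : _ = _ := h
        subst this
        rfl
      | inr h =>
        have := h2 _ _ h
        rename_i a b
        show f _ = f _
        rcases a with a | a <;> rcases b with b | b <;> simpa [f] using this
  intro x y h
  exact hle h


/-- Non-middle points are boundary points. -/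
lemma exists_embB {x : Fin k ⊕ (Fin l ⊕ Fin m)} (hx : ¬ IsMiddle x) :
    ∃ z : Fin k ⊕ Fin m, embB (l := l) z = x := by
  rcases x with a | (b | c)
  · exact ⟨Sum.inl a, rfl⟩
  · exact absurd trivial hx
  · exact ⟨Sum.inr c, rfl⟩

/-- The key counting identity:
`∑_ζ δ_p(α,ζ) δ_q(ζ,β) = n^{rl(q,p)} δ_{qp}(α,β)`. -/
lemma count_middle (p : Partition k l) (q : Partition l m) (hn : 0 < n)
    (α : Fin k → Fin n) (β : Fin m → Fin n) :
    (∑ ζ : Fin l → Fin n,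
        if labelsMatch p α ζ ∧ labelsMatch q ζ β then (1 : ℕ) else 0)
      = if labelsMatch (comp q p) α β then n ^ rl q p else 0 := by
  classical
  by_cases hαβ : labelsMatch (comp q p) α β
  · rw [if_pos hαβ]
    letI J : Setoid (Fin k ⊕ (Fin l ⊕ Fin m)) := compJoin q p
    haveI : Inhabited (Fin n) := ⟨⟨0, hn⟩⟩
    set Mid : Quotient (compJoin q p) → Prop :=
      fun c => ∀ x, Quotient.mk (compJoin q p) x = c → IsMiddle x with hMid
    set bL : (Fin k ⊕ (Fin l ⊕ Fin m)) → Fin n :=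
      Sum.elim α (Sum.elim (fun _ => default) β) with hbL
    have bL_embB : ∀ z : Fin k ⊕ Fin m, bL (embB z) = Sum.elim α β z := by
      rintro (a | c) <;> rfl
    have bL_cons : ∀ x y, ¬ IsMiddle x → ¬ IsMiddle y →
        (compJoin q p).r x y → bL x = bL y := by
      intro x y hx hy hxy
      obtain ⟨z, rfl⟩ := exists_embB hx
      obtain ⟨w, rfl⟩ := exists_embB hy
      rw [bL_embB, bL_embB]
      exact hαβ z w hxy
    have exNM : ∀ c, ¬ Mid c →
        ∃ x, Quotient.mk (compJoin q p) x = c ∧ ¬ IsMiddle x := by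
      intro c hc
      simp only [hMid] at hc
      push_neg at hc
      exact hc
    set G : ({c : Quotient (compJoin q p) // Mid c} → Fin n) →
        Quotient (compJoin q p) → Fin n :=
      fun h c => if hc : Mid c then h ⟨c, hc⟩
        else bL (Classical.choose (exNM c hc)) with hG
    -- G is given by bL at any non-middle representative
    have G_spec : ∀ (h) (c) (x), Quotient.mk (compJoin q p) x = c → ¬ IsMiddle x →
        G h c = bL x := by
      intro h c x hx hnm
      have hc : ¬ Mid c := fun hc' => hnm (hc' x hx)
      rw [hG]
      simp only [dif_neg hc]
      obtain ⟨hx', hnm'⟩ := Classical.choose_spec (exNM c hc)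
      exact bL_cons _ _ hnm' hnm (Quotient.exact (hx'.trans hx.symm))
    -- the labelling induced by a choice on middle blocks
    set zf : ({c : Quotient (compJoin q p) // Mid c} → Fin n) → (Fin l → Fin n) :=
      fun h b => G h (Quotient.mk (compJoin q p) (Sum.inr (Sum.inl b))) with hzf
    have zf_spec : ∀ (h) (x : Fin k ⊕ (Fin l ⊕ Fin m)),
        Sum.elim α (Sum.elim (zf h) β) x = G h (Quotient.mk (compJoin q p) x) := by
      rintro h (a | (b | c))
      · exact (G_spec h _ (Sum.inl a) rfl (fun hh => hh)).symm
      · rfl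
      · exact (G_spec h _ (Sum.inr (Sum.inr c)) rfl (fun hh => hh)).symm
    have zf_mem : ∀ h, labelsMatch p α (zf h) ∧ labelsMatch q (zf h) β := by
      intro h
      constructor
      · intro x y hxy
        have h1 := compJoin_of_p p q (m := m) hxy
        have h2 : Quotient.mk (compJoin q p) (ιP x) = Quotient.mk (compJoin q p) (ιP y) :=
          Quotient.sound h1
        have h3 := (zf_spec h (ιP x)).trans (h2 ▸ (zf_spec h (ιP y)).symm)
        rcases x with a | b <;> rcases y with a' | b' <;> simpa [ιP] using h3
      · intro x y hxy
        have h1 := compJoin_of_q p q hxy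
        have h2 : Quotient.mk (compJoin q p) (Sum.inr x) = Quotient.mk (compJoin q p) (Sum.inr y) :=
          Quotient.sound h1
        have h3 := (zf_spec h (Sum.inr x)).trans (h2 ▸ (zf_spec h (Sum.inr y)).symm)
        rcases x with a | b <;> rcases y with a' | b' <;> simpa using h3
    -- the equivalence
    set S : Type _ := {ζ : Fin l → Fin n // labelsMatch p α ζ ∧ labelsMatch q ζ β}
      with hS
    have toF : ∀ ζ : S, ∀ a b, (compJoin q p).r a b →
        Sum.elim α (Sum.elim ζ.1 β) a = Sum.elim α (Sum.elim ζ.1 β) b :=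
      fun ζ => labelsMatch_join p q ζ.2.1 ζ.2.2
    set Φ : S → ({c : Quotient (compJoin q p) // Mid c} → Fin n) :=
      fun ζ c => Quotient.lift (Sum.elim α (Sum.elim ζ.1 β)) (toF ζ) c.1 with hΦ
    -- G applied to Φ ζ recovers the labelling everywhere
    have GΦ : ∀ (ζ : S) (c) (x), Quotient.mk (compJoin q p) x = c →
        G (Φ ζ) c = Sum.elim α (Sum.elim ζ.1 β) x := by
      intro ζ c x hx
      by_cases hc : Mid c
      · rw [hG]
        simp only [dif_pos hc, hΦ]
        rw [← hx]
        rfl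
      · rw [hG]
        simp only [dif_neg hc]
        obtain ⟨hx', hnm'⟩ := Classical.choose_spec (exNM c hc)
        have hfr : Sum.elim α (Sum.elim ζ.1 β) (Classical.choose (exNM c hc))
            = Sum.elim α (Sum.elim ζ.1 β) x :=
          toF ζ _ _ (Quotient.exact (hx'.trans hx.symm))
        rw [← hfr]
        obtain ⟨z, hz⟩ := exists_embB hnm'
        rw [← hz]
        rcases z with a | c' <;> rfl
    have zf_Φ : ∀ ζ : S, zf (Φ ζ) = ζ.1 := by
      intro ζ
      funext b
      exact GΦ ζ _ (Sum.inr (Sum.inl b)) rfl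
    have Φ_zf : ∀ h, Φ ⟨zf h, zf_mem h⟩ = h := by
      intro h
      funext c
      obtain ⟨x, hx⟩ := Quotient.exists_rep c.1
      have hmx := c.2 x hx
      rcases x with a | (b | c')
      · exact hmx.elim
      · show Quotient.lift _ _ c.1 = h c
        rw [← hx]
        show Sum.elim α (Sum.elim (zf h) β) (Sum.inr (Sum.inl b)) = h c
        rw [zf_spec h (Sum.inr (Sum.inl b))]
        rw [hG]
        have hm : Mid (Quotient.mk (compJoin q p) (Sum.inr (Sum.inl b))) := hx ▸ c.2
        simp only [dif_pos hm]
        congr 1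
        exact Subtype.ext hx
      · exact hmx.elim
    let E : S ≃ ({c : Quotient (compJoin q p) // Mid c} → Fin n) :=
      ⟨Φ, fun h => ⟨zf h, zf_mem h⟩, fun ζ => Subtype.ext (zf_Φ ζ), Φ_zf⟩
    -- count
    have hcard1 : (∑ ζ : Fin l → Fin n,
        if labelsMatch p α ζ ∧ labelsMatch q ζ β then (1 : ℕ) else 0)
        = Fintype.card S := by
      rw [Fintype.card_subtype]
      rw [Finset.card_filter]
    rw [hcard1, Fintype.card_congr E, Fintype.card_fun, Fintype.card_fin]
    congr 1
    rw [rl, Nat.card_eq_fintype_card]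
  · rw [if_neg hαβ]
    apply Finset.sum_eq_zero
    intro ζ _
    rw [if_neg]
    rintro ⟨h1, h2⟩
    apply hαβ
    intro z w hzw
    have h3 := labelsMatch_join p q h1 h2 (embB z) (embB w) hzw
    rcases z with a | c <;> rcases w with a' | c' <;> simpa [embB] using h3

lemma sum_delta_smul {A : Type*} [AddCommGroup A] (p : Partition k l) (q : Partition l m)
    (hn : 0 < n) (α : Fin k → Fin n) (β : Fin m → Fin n) (x : A) :
    (∑ ζ : Fin l → Fin n,
        if labelsMatch p α ζ ∧ labelsMatch q ζ β then x else 0)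
      = if labelsMatch (comp q p) α β then (n ^ rl q p) • x else 0 := by
  classical
  have h1 : ∀ ζ : Fin l → Fin n,
      (if labelsMatch p α ζ ∧ labelsMatch q ζ β then x else 0)
        = (if labelsMatch p α ζ ∧ labelsMatch q ζ β then (1 : ℕ) else 0) • x := by
    intro ζ; split <;> simp
  rw [Finset.sum_congr rfl (fun ζ _ => h1 ζ), ← Finset.sum_smul,
    count_middle p q hn α β]
  split <;> simp

end Aux

/-- Theorem 2.9(c): if the relations `R(p)` and `R(q)` hold for the self-adjoint
generators `u_{ij}` with `p ∈ P(k,l)`, `q ∈ P(l,m)`, then so do the relations `R(qp)`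
for the composition `qp ∈ P(k,m)`. -/
theorem satisfiesRel_comp {A : Type*} [CStarAlgebra A] {n : ℕ}
    (u : Fin n → Fin n → A) (hsa : ∀ i j, IsSelfAdjoint (u i j))
    {k l m : ℕ} (p : Partition k l) (q : Partition l m)
    (hp : SatisfiesRel u p) (hq : SatisfiesRel u q) :
    SatisfiesRel u (comp q p) := by
  classical
  rcases Nat.eq_zero_or_pos n with hn | hn
  · subst hn
    intro α β
    rcases Nat.eq_zero_or_pos k with hk | hk
    · rcases Nat.eq_zero_or_pos m with hm | hm
      · subst hk; subst hm
        apply Finset.sum_congr rfl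
        intro γ hγ
        have h1 : α = γ := Subsingleton.elim _ _
        have h2 : β = γ := Subsingleton.elim _ _
        rw [h1, h2]
      · exact (β ⟨0, hm⟩).elim0
    · exact (α ⟨0, hk⟩).elim0
  · intro α β
    have hN : n ^ rl q p ≠ 0 := pow_ne_zero _ hn.ne'
    have key : (n ^ rl q p) • (∑ γ : Fin k → Fin n,
          if labelsMatch (comp q p) γ β then (List.ofFn fun s => u (γ s) (α s)).prod else 0)
        = (n ^ rl q p) • (∑ γ' : Fin m → Fin n,
          if labelsMatch (comp q p) α γ' then (List.ofFn fun t => u (β t) (γ' t)).prod else 0) := by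
      rw [Finset.smul_sum, Finset.smul_sum]
      calc
        (∑ γ : Fin k → Fin n, (n ^ rl q p) • if labelsMatch (comp q p) γ β then
              (List.ofFn fun s => u (γ s) (α s)).prod else 0)
            = ∑ γ : Fin k → Fin n, ∑ ζ : Fin l → Fin n,
              if labelsMatch p γ ζ ∧ labelsMatch q ζ β then
                (List.ofFn fun s => u (γ s) (α s)).prod else 0 := by
          refine Finset.sum_congr rfl fun γ _ => ?_
          rw [sum_delta_smul p q hn γ β]
          split <;> simp
        _ = ∑ ζ : Fin l → Fin n, ∑ γ : Fin k → Fin n,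
              if labelsMatch p γ ζ ∧ labelsMatch q ζ β then
                (List.ofFn fun s => u (γ s) (α s)).prod else 0 := Finset.sum_comm
        _ = ∑ ζ : Fin l → Fin n, if labelsMatch q ζ β then
              ∑ γ : Fin k → Fin n, if labelsMatch p γ ζ then
                (List.ofFn fun s => u (γ s) (α s)).prod else 0
              else 0 := by
          refine Finset.sum_congr rfl fun ζ _ => ?_
          by_cases hb : labelsMatch q ζ β <;> simp [hb]
        _ = ∑ ζ : Fin l → Fin n, if labelsMatch q ζ β then
              ∑ γ' : Fin l → Fin n, if labelsMatch p α γ' then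
                (List.ofFn fun t => u (ζ t) (γ' t)).prod else 0
              else 0 := by
          refine Finset.sum_congr rfl fun ζ _ => ?_
          rw [hp α ζ]
        _ = ∑ ζ : Fin l → Fin n, ∑ γ' : Fin l → Fin n,
              if labelsMatch p α γ' ∧ labelsMatch q ζ β then
                (List.ofFn fun t => u (ζ t) (γ' t)).prod else 0 := by
          refine Finset.sum_congr rfl fun ζ _ => ?_
          by_cases hb : labelsMatch q ζ β <;> simp [hb]
        _ = ∑ γ' : Fin l → Fin n, ∑ ζ : Fin l → Fin n,
              if labelsMatch p α γ' ∧ labelsMatch q ζ β then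
                (List.ofFn fun t => u (ζ t) (γ' t)).prod else 0 := Finset.sum_comm
        _ = ∑ γ' : Fin l → Fin n, if labelsMatch p α γ' then
              ∑ ζ : Fin l → Fin n, if labelsMatch q ζ β then
                (List.ofFn fun t => u (ζ t) (γ' t)).prod else 0
              else 0 := by
          refine Finset.sum_congr rfl fun γ' _ => ?_
          by_cases hb : labelsMatch p α γ' <;> simp [hb]
        _ = ∑ γ' : Fin l → Fin n, if labelsMatch p α γ' then
              ∑ γ'' : Fin m → Fin n, if labelsMatch q γ' γ'' then
                (List.ofFn fun r => u (β r) (γ'' r)).prod else 0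
              else 0 := by
          refine Finset.sum_congr rfl fun γ' _ => ?_
          by_cases hb : labelsMatch p α γ'
          · rw [if_pos hb, if_pos hb, hq γ' β]
          · rw [if_neg hb, if_neg hb]
        _ = ∑ γ' : Fin l → Fin n, ∑ γ'' : Fin m → Fin n,
              if labelsMatch p α γ' ∧ labelsMatch q γ' γ'' then
                (List.ofFn fun r => u (β r) (γ'' r)).prod else 0 := by
          refine Finset.sum_congr rfl fun γ' _ => ?_
          by_cases hb : labelsMatch p α γ' <;> simp [hb]
        _ = ∑ γ'' : Fin m → Fin n, ∑ γ' : Fin l → Fin n,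
              if labelsMatch p α γ' ∧ labelsMatch q γ' γ'' then
                (List.ofFn fun r => u (β r) (γ'' r)).prod else 0 := Finset.sum_comm
        _ = ∑ γ'' : Fin m → Fin n, (n ^ rl q p) • if labelsMatch (comp q p) α γ'' then
              (List.ofFn fun t => u (β t) (γ'' t)).prod else 0 := by
          refine Finset.sum_congr rfl fun γ'' _ => ?_
          rw [sum_delta_smul p q hn α γ'']
          split <;> simp
    have h2 : ((n ^ rl q p : ℕ) : ℂ) • (∑ γ : Fin k → Fin n,
          if labelsMatch (comp q p) γ β then (List.ofFn fun s => u (γ s) (α s)).prod else 0)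
        = ((n ^ rl q p : ℕ) : ℂ) • (∑ γ' : Fin m → Fin n,
          if labelsMatch (comp q p) α γ' then (List.ofFn fun t => u (β t) (γ' t)).prod else 0) := by
      rw [Nat.cast_smul_eq_nsmul, Nat.cast_smul_eq_nsmul]
      exact key
    have hc : ((n : ℂ)) ^ rl q p ≠ 0 :=
      pow_ne_zero _ (Nat.cast_ne_zero.mpr hn.ne')
    have h3 := congrArg (fun z => ((n ^ rl q p : ℕ) : ℂ)⁻¹ • z) h2
    simpa [smul_smul, inv_mul_cancel₀ hc] using h3

end PartitionCstar
end

section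
/- (Theorem 2.9(d)) Let A be a unital C*-algebra and u_{ij} ∈ A (1 ≤ i,j ≤ n) be self-adjoint. Let p ∈ P(k,l) be a partition. If the relations R(p) hold for the u_{ij}, then the relations R(p̃) hold, where p̃ ∈ P(k,l) is the vertical reflection of p. -/
open scoped Classical

namespace PartitionCstar

lemma star_list_prod {A : Type*} [Monoid A] [StarMul A] (L : List A) :
    star L.prod = (L.map star).reverse.prod := by
  induction L with
  | nil => simp
  | cons a L ih =>
    rw [List.prod_cons, star_mul, ih, List.map_cons, List.reverse_cons,
      List.prod_append, List.prod_cons, List.prod_nil, mul_one]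

lemma ofFn_reverse {α : Type*} {m : ℕ} (f : Fin m → α) :
    (List.ofFn f).reverse = List.ofFn (fun i => f i.rev) := by
  apply List.ext_getElem
  · simp
  · intro i h1 h2
    simp only [List.getElem_reverse, List.getElem_ofFn, List.length_ofFn] at *
    congr 1
    ext
    simp [Fin.rev]
    omega

lemma star_ofFn_prod {A : Type*} [Monoid A] [StarMul A] {m : ℕ} (v : Fin m → A) :
    star (List.ofFn v).prod = (List.ofFn fun s => star (v s.rev)).prod := by
  rw [star_list_prod, List.map_ofFn, ofFn_reverse]
  rfl

lemma labelsMatch_reflect_iff {n k l : ℕ} (p : Partition k l) (α : Fin k → Fin n)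
    (β : Fin l → Fin n) :
    labelsMatch (reflect p) α β ↔ labelsMatch p (α ∘ Fin.rev) (β ∘ Fin.rev) := by
  constructor
  · intro h x y hxy
    have h' := h (Sum.map Fin.rev Fin.rev x) (Sum.map Fin.rev Fin.rev y)
      (by
        show p.r _ _
        cases x <;> cases y <;> simpa [Fin.rev_rev] using hxy)
    cases x <;> cases y <;> simpa using h'
  · intro h x y hxy
    have h' := h (Sum.map Fin.rev Fin.rev x) (Sum.map Fin.rev Fin.rev y) hxy
    cases x <;> cases y <;> simpa [Fin.rev_rev] using h'

/-- Theorem 2.9(d): if the relations `R(p)` hold for the self-adjoint generators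
`u_{ij}`, then so do the relations `R(p̃)` for the vertical reflection `p̃`. -/
theorem satisfiesRel_reflect {A : Type*} [CStarAlgebra A] {n : ℕ}
    (u : Fin n → Fin n → A) (hsa : ∀ i j, IsSelfAdjoint (u i j))
    {k l : ℕ} (p : Partition k l) (hp : SatisfiesRel u p) :
    SatisfiesRel u (reflect p) := by
  intro α β
  have h := congrArg star (hp (α ∘ Fin.rev) (β ∘ Fin.rev))
  rw [star_sum, star_sum] at h
  have ek : ∀ (m : ℕ) (F : (Fin m → Fin n) → A),
      ∑ γ : Fin m → Fin n, F γ = ∑ γ : Fin m → Fin n, F (γ ∘ Fin.rev) := by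
    intro m F
    exact (Fintype.sum_equiv (Equiv.arrowCongr Fin.revPerm (Equiv.refl (Fin n)))
      _ _ (fun γ => rfl)).symm
  calc (∑ γ : Fin k → Fin n,
        if labelsMatch (reflect p) γ β then (List.ofFn fun s => u (γ s) (α s)).prod else 0)
      = ∑ γ : Fin k → Fin n,
        star (if labelsMatch p γ (β ∘ Fin.rev) then
          (List.ofFn fun s => u (γ s) ((α ∘ Fin.rev) s)).prod else 0) := by
        rw [ek k (fun γ => star (if labelsMatch p γ (β ∘ Fin.rev) then
          (List.ofFn fun s => u (γ s) ((α ∘ Fin.rev) s)).prod else 0))]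
        refine Finset.sum_congr rfl fun γ _ => ?_
        rw [apply_ite star, star_zero, star_ofFn_prod]
        have hc : labelsMatch (reflect p) γ β ↔
            labelsMatch p (γ ∘ Fin.rev) (β ∘ Fin.rev) := labelsMatch_reflect_iff p γ β
        simp only [Function.comp_apply, Fin.rev_rev, (hsa _ _).star_eq]
        exact if_congr hc rfl rfl
    _ = ∑ γ' : Fin l → Fin n,
        star (if labelsMatch p (α ∘ Fin.rev) γ' then
          (List.ofFn fun t => u ((β ∘ Fin.rev) t) (γ' t)).prod else 0) := h
    _ = ∑ γ' : Fin l → Fin n,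
        if labelsMatch (reflect p) α γ' then (List.ofFn fun t => u (β t) (γ' t)).prod else 0 := by
        rw [ek l (fun γ' => star (if labelsMatch p (α ∘ Fin.rev) γ' then
          (List.ofFn fun t => u ((β ∘ Fin.rev) t) (γ' t)).prod else 0))]
        refine Finset.sum_congr rfl fun γ' _ => ?_
        rw [apply_ite star, star_zero, star_ofFn_prod]
        have hc : labelsMatch (reflect p) α γ' ↔
            labelsMatch p (α ∘ Fin.rev) (γ' ∘ Fin.rev) := labelsMatch_reflect_iff p α γ'
        simp only [Function.comp_apply, Fin.rev_rev, (hsa _ _).star_eq]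
        exact (if_congr hc rfl rfl).symm

end PartitionCstar
end

section
/- (Theorem 2.9(e)) Let A be a unital C*-algebra and u_{ij} ∈ A (1 ≤ i,j ≤ n) be self-adjoint, satisfying Σ_{m=1}^n u_{im}u_{jm} = δ_{ij}·1 and Σ_{m=1}^n u_{mi}u_{mj} = δ_{ij}·1 for all i,j (the relations R(⊔) and R(⊓) of the pair partitions). Let p ∈ P(k,l) be a partition. If the relations R(p) hold for the u_{ij}, then the relations R(p*) hold, where p* ∈ P(l,k) is the involution of p. -/
open scoped Classical

namespace PartitionCstar

section Aux

variable {A : Type*} [Ring A] {n : ℕ} (u : Fin n → Fin n → A)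

/-- Forward product `u_{a₁b₁}⋯u_{aₖbₖ}`. -/
def Pw {k : ℕ} (a b : Fin k → Fin n) : A :=
  (List.ofFn fun s => u (a s) (b s)).prod

/-- Backward product `u_{aₖbₖ}⋯u_{a₁b₁}`. -/
def Qw {k : ℕ} (a b : Fin k → Fin n) : A :=
  (List.ofFn fun s => u (a s) (b s)).reverse.prod

lemma Pw_zero (a b : Fin 0 → Fin n) : Pw u a b = 1 := by simp [Pw]

lemma Qw_zero (a b : Fin 0 → Fin n) : Qw u a b = 1 := by simp [Qw]

lemma Pw_succ {k : ℕ} (a b : Fin (k + 1) → Fin n) :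
    Pw u a b = u (a 0) (b 0) * Pw u (fun i => a i.succ) (fun i => b i.succ) := by
  simp [Pw, List.ofFn_succ]

lemma Qw_succ {k : ℕ} (a b : Fin (k + 1) → Fin n) :
    Qw u a b = Qw u (fun i => a i.succ) (fun i => b i.succ) * u (a 0) (b 0) := by
  simp [Qw, List.ofFn_succ]

lemma star_Pw [StarRing A] (hsa : ∀ i j, IsSelfAdjoint (u i j)) {k : ℕ}
    (a b : Fin k → Fin n) : star (Pw u a b) = Qw u a b := by
  induction k with
  | zero => rw [Pw_zero, Qw_zero, star_one]
  | succ k ih =>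
    rw [Pw_succ, Qw_succ, star_mul, ih, (hsa (a 0) (b 0)).star_eq]

lemma star_Qw [StarRing A] (hsa : ∀ i j, IsSelfAdjoint (u i j)) {k : ℕ}
    (a b : Fin k → Fin n) : star (Qw u a b) = Pw u a b := by
  rw [← star_Pw u hsa, star_star]

/-- Pull a sum out of an `if` with condition independent of the index. -/
lemma sum_ite_push {ι : Type*} [Fintype ι] (c : Prop) [Decidable c] (f : ι → A) :
    (∑ i, if c then f i else 0) = if c then ∑ i, f i else 0 := by
  split <;> simp

/-- Collapse a sum of a guarded Kronecker delta. -/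
lemma sum_ite_delta {ι : Type*} [Fintype ι] [DecidableEq ι] (c : ι → Prop)
    [DecidablePred c] (a : ι) :
    (∑ i, if c i then (if i = a then (1 : A) else 0) else 0) = if c a then 1 else 0 := by
  have h : ∀ i, (if c i then (if i = a then (1 : A) else 0) else 0)
      = if i = a then (if c a then 1 else 0) else 0 := by
    intro i
    by_cases h1 : i = a
    · subst h1; simp
    · simp [h1]
  simp only [h]
  simp [Finset.sum_ite_eq']

/-- Decompose a sum over `Fin (k+1) → Fin n` using `Fin.cons`. -/
lemma sum_fun_succ {M : Type*} [AddCommMonoid M] {k : ℕ}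
    (F : (Fin (k + 1) → Fin n) → M) :
    (∑ γ : Fin (k + 1) → Fin n, F γ)
      = ∑ x : Fin n, ∑ γ' : Fin k → Fin n, F (Fin.cons x γ') := by
  rw [← (Fin.consEquiv (fun _ : Fin (k + 1) => Fin n)).sum_comp F, Fintype.sum_prod_type]
  rfl

lemma funext_succ_iff {k : ℕ} (a b : Fin (k + 1) → Fin n) :
    a = b ↔ (a 0 = b 0 ∧ (fun i : Fin k => a i.succ) = fun i : Fin k => b i.succ) := by
  constructor
  · rintro rfl; exact ⟨rfl, rfl⟩
  · rintro ⟨h0, hs⟩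
    funext i
    cases i using Fin.cases with
    | zero => exact h0
    | succ j => exact congrFun hs j

/-- Tensor-power orthogonality, first kind: `U⁽ᵏ⁾ (U⁽ᵏ⁾)† = 1`. -/
lemma orth1 (hpair₁ : ∀ i j, (∑ m, u i m * u j m) = if i = j then (1 : A) else 0)
    {k : ℕ} (a b : Fin k → Fin n) :
    (∑ γ : Fin k → Fin n, Pw u a γ * Qw u b γ) = if a = b then 1 else 0 := by
  induction k with
  | zero =>
    simp [Pw_zero, Qw_zero, Subsingleton.elim a b]
  | succ k ih =>
    rw [sum_fun_succ]
    have hterm : ∀ (x : Fin n) (γ' : Fin k → Fin n),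
        Pw u a (Fin.cons x γ') * Qw u b (Fin.cons x γ')
          = u (a 0) x * ((Pw u (fun i => a i.succ) γ' * Qw u (fun i => b i.succ) γ')
              * u (b 0) x) := by
      intro x γ'
      rw [Pw_succ, Qw_succ]
      simp only [Fin.cons_zero, Fin.cons_succ, mul_assoc]
    have hx : ∀ x : Fin n,
        (∑ γ' : Fin k → Fin n, Pw u a (Fin.cons x γ') * Qw u b (Fin.cons x γ'))
          = u (a 0) x * ((if (fun i : Fin k => a i.succ) = fun i => b i.succ then (1 : A)
              else 0) * u (b 0) x) := by
      intro x
      simp only [hterm]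
      rw [← Finset.mul_sum, ← Finset.sum_mul, ih]
    simp only [hx]
    by_cases hs : (fun i : Fin k => a i.succ) = fun i => b i.succ
    · simp only [if_pos hs, one_mul]
      rw [hpair₁]
      simp only [funext_succ_iff]
      by_cases h0 : a 0 = b 0 <;> simp [h0, hs]
    · simp only [if_neg hs, zero_mul, mul_zero, Finset.sum_const_zero, funext_succ_iff]
      simp [hs]

/-- Tensor-power orthogonality, second kind: `(U⁽ᵏ⁾)† U⁽ᵏ⁾ = 1`. -/
lemma orth2 (hpair₂ : ∀ i j, (∑ m, u m i * u m j) = if i = j then (1 : A) else 0)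
    {k : ℕ} (a b : Fin k → Fin n) :
    (∑ γ : Fin k → Fin n, Qw u γ a * Pw u γ b) = if a = b then 1 else 0 := by
  induction k with
  | zero =>
    simp [Pw_zero, Qw_zero, Subsingleton.elim a b]
  | succ k ih =>
    rw [sum_fun_succ]
    have hterm : ∀ (x : Fin n) (γ' : Fin k → Fin n),
        Qw u (Fin.cons x γ') a * Pw u (Fin.cons x γ') b
          = Qw u γ' (fun i => a i.succ) * ((u x (a 0) * u x (b 0))
              * Pw u γ' (fun i => b i.succ)) := by
      intro x γ'
      rw [Pw_succ, Qw_succ]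
      simp only [Fin.cons_zero, Fin.cons_succ, mul_assoc]
    rw [Finset.sum_comm]
    have hg : ∀ γ' : Fin k → Fin n,
        (∑ x : Fin n, Qw u (Fin.cons x γ') a * Pw u (Fin.cons x γ') b)
          = Qw u γ' (fun i => a i.succ) * ((if a 0 = b 0 then (1 : A) else 0)
              * Pw u γ' (fun i => b i.succ)) := by
      intro γ'
      simp only [hterm]
      conv_rhs => rw [← hpair₂ (a 0) (b 0), Finset.sum_mul, Finset.mul_sum]
    simp only [hg]
    by_cases h0 : a 0 = b 0
    · simp only [if_pos h0, one_mul]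
      rw [ih]
      simp only [funext_succ_iff]
      by_cases hs : (fun i : Fin k => a i.succ) = fun i => b i.succ <;> simp [h0, hs]
    · simp only [if_neg h0, zero_mul, mul_zero, Finset.sum_const_zero, funext_succ_iff]
      simp [h0]

end Aux

/-- The key intermediate identity `(U⁽ˡ⁾)† T_pᵗ = T_pᵗ (U⁽ᵏ⁾)†`. -/
lemma keyI {A : Type*} [Ring A] {n : ℕ} (u : Fin n → Fin n → A)
    (hpair₁ : ∀ i j, (∑ m, u i m * u j m) = if i = j then (1 : A) else 0)
    (hpair₂ : ∀ i j, (∑ m, u m i * u m j) = if i = j then (1 : A) else 0)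
    {k l : ℕ} (p : Partition k l) (hp : SatisfiesRel u p)
    (α : Fin k → Fin n) (d : Fin l → Fin n) :
    (∑ β : Fin l → Fin n, if labelsMatch p α β then Qw u β d else 0)
      = ∑ γ : Fin k → Fin n, if labelsMatch p γ d then Qw u α γ else 0 := by
  have hp' : ∀ (c : Fin k → Fin n) (e : Fin l → Fin n),
      (∑ γ : Fin k → Fin n, if labelsMatch p γ e then Pw u γ c else 0)
        = ∑ γ' : Fin l → Fin n, if labelsMatch p c γ' then Pw u e γ' else 0 := hp
  calc
    (∑ β : Fin l → Fin n, if labelsMatch p α β then Qw u β d else 0)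
        = ∑ β : Fin l → Fin n, ∑ α' : Fin k → Fin n,
            Qw u β d * ((∑ γ : Fin k → Fin n, if labelsMatch p γ β then Pw u γ α' else 0)
              * Qw u α α') := by
      apply Finset.sum_congr rfl
      intro β _
      have hinner : ∀ α' : Fin k → Fin n,
          (∑ γ : Fin k → Fin n, if labelsMatch p γ β then Pw u γ α' else 0) * Qw u α α'
            = ∑ γ : Fin k → Fin n,
                if labelsMatch p γ β then Pw u γ α' * Qw u α α' else 0 := by
        intro α'
        rw [Finset.sum_mul]
        exact Finset.sum_congr rfl fun γ _ => by rw [ite_mul, zero_mul]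
      simp only [hinner]
      rw [← Finset.mul_sum, Finset.sum_comm]
      have hγ : ∀ γ : Fin k → Fin n,
          (∑ α' : Fin k → Fin n,
              if labelsMatch p γ β then Pw u γ α' * Qw u α α' else 0)
            = if labelsMatch p γ β then (if γ = α then (1 : A) else 0) else 0 := by
        intro γ
        rw [sum_ite_push, orth1 u hpair₁]
      simp only [hγ]
      rw [sum_ite_delta]
      by_cases h : labelsMatch p α β <;> simp [h]
    _ = ∑ β : Fin l → Fin n, ∑ α' : Fin k → Fin n,
            Qw u β d * ((∑ γ' : Fin l → Fin n, if labelsMatch p α' γ' then Pw u β γ' else 0)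
              * Qw u α α') := by
      simp only [hp']
    _ = ∑ γ : Fin k → Fin n, if labelsMatch p γ d then Qw u α γ else 0 := by
      rw [Finset.sum_comm]
      apply Finset.sum_congr rfl
      intro α' _
      have hterm : ∀ β : Fin l → Fin n,
          Qw u β d * ((∑ γ' : Fin l → Fin n, if labelsMatch p α' γ' then Pw u β γ' else 0)
              * Qw u α α')
            = ∑ γ' : Fin l → Fin n,
                (if labelsMatch p α' γ' then Qw u β d * Pw u β γ' else 0) * Qw u α α' := by
        intro β
        rw [Finset.sum_mul, Finset.mul_sum]
        apply Finset.sum_congr rfl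
        intro γ' _
        by_cases h : labelsMatch p α' γ' <;> simp [h, mul_assoc]
      simp only [hterm]
      rw [Finset.sum_comm]
      have hγ' : ∀ γ' : Fin l → Fin n,
          (∑ β : Fin l → Fin n,
              (if labelsMatch p α' γ' then Qw u β d * Pw u β γ' else 0) * Qw u α α')
            = (if labelsMatch p α' γ' then (if d = γ' then (1 : A) else 0) else 0)
                * Qw u α α' := by
        intro γ'
        rw [← Finset.sum_mul]
        congr 1
        rw [sum_ite_push, orth2 u hpair₂]
      simp only [hγ']
      have hcollapse :
          (∑ γ' : Fin l → Fin n,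
              (if labelsMatch p α' γ' then (if d = γ' then (1 : A) else 0) else 0)
                * Qw u α α')
            = (if labelsMatch p α' d then (1 : A) else 0) * Qw u α α' := by
        rw [← Finset.sum_mul]
        congr 1
        have h : ∀ γ' : Fin l → Fin n,
            (if labelsMatch p α' γ' then (if d = γ' then (1 : A) else 0) else 0)
              = if labelsMatch p α' γ' then (if γ' = d then (1 : A) else 0) else 0 := by
          intro γ'
          simp [eq_comm]
        simp only [h]
        exact sum_ite_delta _ d
      rw [hcollapse]
      by_cases h : labelsMatch p α' d <;> simp [h]

lemma labelsMatch_involution {n k l : ℕ} (p : Partition k l)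
    (γ : Fin l → Fin n) (β : Fin k → Fin n) :
    labelsMatch (involution p) γ β ↔ labelsMatch p β γ := by
  constructor
  · intro h x y hxy
    have := h (Sum.swap x) (Sum.swap y)
      (show p.r (Sum.swap (Sum.swap x)) (Sum.swap (Sum.swap y)) by
        rw [Sum.swap_swap, Sum.swap_swap]; exact hxy)
    cases x <;> cases y <;> simpa using this
  · intro h x y hxy
    have := h (Sum.swap x) (Sum.swap y) hxy
    cases x <;> cases y <;> simpa using this

/-- Theorem 2.9(e): if the pair relations `∑ₘ u_{im}u_{jm} = δ_{ij}·1` and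
`∑ₘ u_{mi}u_{mj} = δ_{ij}·1` hold and the relations `R(p)` hold for the self-adjoint
generators `u_{ij}`, then so do the relations `R(p*)` for the involution `p*`. -/
theorem satisfiesRel_involution {A : Type*} [CStarAlgebra A] {n : ℕ}
    (u : Fin n → Fin n → A) (hsa : ∀ i j, IsSelfAdjoint (u i j))
    (hpair₁ : ∀ i j, (∑ m, u i m * u j m) = if i = j then (1 : A) else 0)
    (hpair₂ : ∀ i j, (∑ m, u m i * u m j) = if i = j then (1 : A) else 0)
    {k l : ℕ} (p : Partition k l) (hp : SatisfiesRel u p) :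
    SatisfiesRel u (involution p) := by
  intro α β
  have hI := keyI u hpair₁ hpair₂ p hp β α
  have hstar := congrArg star hI
  simp only [star_sum, apply_ite (star : A → A), star_zero, star_Qw u hsa] at hstar
  -- `hstar : ∑ β', if labelsMatch p β β' then Pw u β' α else 0
  --        = ∑ γ, if labelsMatch p γ α then Pw u β γ else 0`
  calc
    (∑ γ : Fin l → Fin n,
        if labelsMatch (involution p) γ β then (List.ofFn fun s => u (γ s) (α s)).prod else 0)
      = ∑ γ : Fin l → Fin n, if labelsMatch p β γ then Pw u γ α else 0 := by
        apply Finset.sum_congr rfl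
        intro γ _
        exact if_congr (labelsMatch_involution p γ β) rfl rfl
    _ = ∑ γ' : Fin k → Fin n, if labelsMatch p γ' α then Pw u β γ' else 0 := hstar
    _ = ∑ γ' : Fin k → Fin n,
          if labelsMatch (involution p) α γ' then (List.ofFn fun t => u (β t) (γ' t)).prod
            else 0 := by
        apply Finset.sum_congr rfl
        intro γ' _
        exact if_congr (labelsMatch_involution p α γ').symm rfl rfl

end PartitionCstar
end

section
/- Let A be a unital C*-algebra and u_{ij} ∈ A (1 ≤ i,j ≤ n) be self-adjoint elements. Assume that for all α_1, α_2 and all β_1,…,β_8 in {1,…,n}: δ_{β_1β_4}δ_{β_2β_3}δ_{β_3β_5}δ_{β_6β_8}·u_{β_2α_1}u_{β_7α_2} = Σ_{γ'_1,γ'_2=1}^n u_{β_1γ'_1}u_{β_2α_1}u_{β_3α_1}u_{β_4γ'_1}u_{β_5α_1}u_{β_6γ'_2}u_{β_7α_2}u_{β_8γ'_2}, and that for all α_1,…,α_5 and β_1, β_2 in {1,…,n}: Σ_{γ=1}^n u_{γα_1}u_{β_2α_2}u_{γα_3}u_{β_1α_4}u_{β_2α_5} = δ_{α_1α_3}δ_{α_2α_5}·u_{β_1α_4}u_{β_2α_2}.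 Then all the u_{ij} commute: u_{ij}u_{kl} = u_{kl}u_{ij} for all i,j,k,l. -/
open scoped Classical

namespace PartitionCstar

/-!
Setting `β₁ = β₃ = h` in `R(p)` and summing over `h`, the first five factors
`u_{hγ₁} u_{β₂α₁} u_{hα₁} u_{β₄γ₁} u_{β₂α₁}` form an instance of `R(q)` and contract to
`u_{β₄α₁} u_{β₂α₁}`: this is the relation of `(q ⊗ |^{⊗3}) p`. Specialising its labels so that
the same `q`-pattern appears once more and contracting again with `R(q)` turns
`u_{ij} u_{kl}` into `u_{kl} u_{ij}`.
-/

section Relations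

variable {ι R : Type*} [Fintype ι] [DecidableEq ι] [NonUnitalSemiring R]

/-- The relations `R(p)` of the partition `p ∈ P(2,8)`. -/
def RelP (u : ι → ι → R) : Prop :=
  ∀ (a₁ a₂ : ι) (b : Fin 8 → ι),
    (if b 0 = b 3 ∧ b 1 = b 2 ∧ b 2 = b 4 ∧ b 5 = b 7 then u (b 1) a₁ * u (b 6) a₂ else 0)
      = ∑ g₁, ∑ g₂, u (b 0) g₁ * u (b 1) a₁ * u (b 2) a₁ * u (b 3) g₁ * u (b 4) a₁ *
          u (b 5) g₂ * u (b 6) a₂ * u (b 7) g₂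

/-- The relations `R(q)` of the partition `q ∈ P(5,2)`. -/
def RelQ (u : ι → ι → R) : Prop :=
  ∀ a₀ a₁ a₂ a₃ a₄ b₁ b₂ : ι,
    ∑ g, u g a₀ * u b₂ a₁ * u g a₂ * u b₁ a₃ * u b₂ a₄
      = if a₀ = a₂ ∧ a₁ = a₄ then u b₁ a₃ * u b₂ a₁ else 0

/-- The relations `R((q ⊗ |^{⊗3}) p)` of the composite partition in `P(2,5)`. -/
def RelQP (u : ι → ι → R) : Prop :=
  ∀ a₁ a₂ c₁ c₂ c₃ c₄ c₅ : ι,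
    (if c₁ = c₂ ∧ c₃ = c₅ then u c₁ a₁ * u c₄ a₂ else 0)
      = ∑ g, u c₁ a₁ * u c₂ a₁ * u c₃ g * u c₄ a₂ * u c₅ g

variable {u : ι → ι → R}

theorem RelQ.sum_sum_eq_mul (hq : RelQ u) (a c₁ c₂ : ι) :
    ∑ g, ∑ h, u h g * u c₂ a * u h a * u c₁ g * u c₂ a = u c₁ a * u c₂ a := by
  rw [Finset.sum_congr rfl fun g _ => hq g a a g a c₁ c₂]
  simp

theorem RelP.relQP (hp : RelP u) (hq : RelQ u) : RelQP u := by
  intro a₁ a₂ c₁ c₂ c₃ c₄ c₅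
  calc (if c₁ = c₂ ∧ c₃ = c₅ then u c₁ a₁ * u c₄ a₂ else 0)
      = ∑ h, if h = c₁ ∧ c₂ = h ∧ h = c₂ ∧ c₃ = c₅ then u c₂ a₁ * u c₄ a₂ else 0 := by
        rw [Finset.sum_eq_single c₁ (fun h _ hh => if_neg fun H => hh H.1) (by simp)]
        split_ifs <;> grind
    _ = ∑ h, ∑ g₁, ∑ g₂, u h g₁ * u c₂ a₁ * u h a₁ * u c₁ g₁ * u c₂ a₁ *
          u c₃ g₂ * u c₄ a₂ * u c₅ g₂ :=
        Finset.sum_congr rfl fun h _ => hp a₁ a₂ ![h, c₂, h, c₁, c₂, c₃, c₄, c₅]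
    _ = ∑ g₂, (∑ g₁, ∑ h, u h g₁ * u c₂ a₁ * u h a₁ * u c₁ g₁ * u c₂ a₁) *
          u c₃ g₂ * u c₄ a₂ * u c₅ g₂ := by
        simp only [Finset.sum_mul]
        exact Finset.sum_comm.trans <|
          (Finset.sum_congr rfl fun _ _ => Finset.sum_comm).trans Finset.sum_comm
    _ = _ := by rw [hq.sum_sum_eq_mul]

theorem RelQP.commute (hqp : RelQP u) (hq : RelQ u) (i j k l : ι) :
    Commute (u i j) (u k l) :=
  calc u i j * u k l = ∑ g, if g = i ∧ g = i then u g j * u k l else 0 := by simp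
    _ = ∑ g, ∑ g₂, u g j * u i j * u g g₂ * u k l * u i g₂ :=
        Finset.sum_congr rfl fun g _ => hqp j l g i g k i
    _ = ∑ g₂, if j = g₂ ∧ j = g₂ then u k l * u i j else 0 := by
        rw [Finset.sum_comm]
        exact Finset.sum_congr rfl fun g₂ _ => hq j j g₂ l g₂ k i
    _ = u k l * u i j := by simp

end Relations

theorem commutes_of_two_relations_general {A : Type*} [CStarAlgebra A] {n : ℕ}
    (u : Fin n → Fin n → A)
    (hp : ∀ (a₁ a₂ : Fin n) (b : Fin 8 → Fin n),
      (if b 0 = b 3 ∧ b 1 = b 2 ∧ b 2 = b 4 ∧ b 5 = b 7 then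
          u (b 1) a₁ * u (b 6) a₂ else 0)
        = ∑ g₁ : Fin n, ∑ g₂ : Fin n,
            u (b 0) g₁ * u (b 1) a₁ * u (b 2) a₁ * u (b 3) g₁ * u (b 4) a₁ *
              u (b 5) g₂ * u (b 6) a₂ * u (b 7) g₂)
    (hq : ∀ (a : Fin 5 → Fin n) (b₁ b₂ : Fin n),
      (∑ g : Fin n, u g (a 0) * u b₂ (a 1) * u g (a 2) * u b₁ (a 3) * u b₂ (a 4))
        = if a 0 = a 2 ∧ a 1 = a 4 then u b₁ (a 3) * u b₂ (a 1) else 0) :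
    ∀ i j k l, u i j * u k l = u k l * u i j := by
  have hq' : RelQ u := fun a₀ a₁ a₂ a₃ a₄ b₁ b₂ => hq ![a₀, a₁, a₂, a₃, a₄] b₁ b₂
  exact fun i j k l => ((RelP.relQP hp hq').commute hq' i j k l).eq

/-- The example from the introduction: the relations `R(p)` and `R(q)` of the two
displayed partitions imply that all generators commute. -/
theorem commutes_of_two_relations {A : Type*} [CStarAlgebra A] {n : ℕ}
    (u : Fin n → Fin n → A) (hsa : ∀ i j, IsSelfAdjoint (u i j))
    (hp : ∀ (a₁ a₂ : Fin n) (b : Fin 8 → Fin n),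
      (if b 0 = b 3 ∧ b 1 = b 2 ∧ b 2 = b 4 ∧ b 5 = b 7 then
          u (b 1) a₁ * u (b 6) a₂ else 0)
        = ∑ g₁ : Fin n, ∑ g₂ : Fin n,
            u (b 0) g₁ * u (b 1) a₁ * u (b 2) a₁ * u (b 3) g₁ * u (b 4) a₁ *
              u (b 5) g₂ * u (b 6) a₂ * u (b 7) g₂)
    (hq : ∀ (a : Fin 5 → Fin n) (b₁ b₂ : Fin n),
      (∑ g : Fin n, u g (a 0) * u b₂ (a 1) * u g (a 2) * u b₁ (a 3) * u b₂ (a 4))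
        = if a 0 = a 2 ∧ a 1 = a 4 then u b₁ (a 3) * u b₂ (a 1) else 0) :
    ∀ i j k l, u i j * u k l = u k l * u i j :=
  commutes_of_two_relations_general u hp hq

end PartitionCstar
end

section
/- (Appendix B, insertion lemma, stated for a fixed representation) Let A be a unital C*-algebra and u_{ij} ∈ A (1 ≤ i,j ≤ n) be self-adjoint. Let p ∈ P(0,l) and q ∈ P(0,m) be partitions on lower points only such that the relations R(p) and R(q) hold for the u_{ij}. Then for every 0 ≤ t ≤ l, the relations R(p') hold, where p' ∈ P(0, l+m) is the partition obtained from placing q between the t-th and (t+1)-th point of p (the m points of q are inserted after position t; the blocks of p and of q are kept separate). -/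
/-
For lower-point partitions, `R(p)` says that `∑_{γ'} δ_p(∅,γ') u_{β₁γ'₁}⋯u_{β_lγ'_l} = δ_p(∅,β)`.
Reindex the multi-indices of `p'` by pairs `(γ_p, γ_q)` through the insertion bijection
`[l+m] ≃ [l] ⊔ [m]`: then `δ_{p'}` factorises as `δ_p(∅,γ_p) δ_q(∅,γ_q)` and the word of `p'` is
(first `t` letters of the word of `p`)(word of `q`)(remaining letters of the word of `p`).
Summing over `γ_q` first, `R(q)` collapses the middle factor to the scalar `δ_q`, and the
remaining sum over `γ_p` is `R(p)`.
-/

open scoped Classical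

namespace PartitionCstar

theorem _root_.Fintype.sum_fun_eq_sum_sum_sumElim {X Y Z W M : Type*} [Fintype X]
    [DecidableEq X] [Fintype Y] [DecidableEq Y] [Fintype Z] [DecidableEq Z] [Fintype W]
    [AddCommMonoid M]
    (e : X ≃ Y ⊕ Z) (F : (X → W) → M) :
    ∑ γ, F γ = ∑ a : Y → W, ∑ b : Z → W, F (Sum.elim a b ∘ e) := by
  rw [← Fintype.sum_prod_type']
  exact (Fintype.sum_equiv ((Equiv.sumArrowEquivProdArrow _ _ _).symm.trans
    (e.arrowCongr (Equiv.refl _)).symm) _ _ fun _ => rfl).symm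

lemma insertMap_surjective (l m t : ℕ) (ht : t ≤ l) :
    Function.Surjective (insertMap l m t ht) := by
  rintro (j | j)
  · by_cases hj : (j : ℕ) < t
    · exact ⟨⟨j, by omega⟩, by simp [insertMap, hj]⟩
    · refine ⟨⟨j + m, by omega⟩, ?_⟩
      simp only [insertMap, dif_neg (show ¬ (j : ℕ) + m < t by omega),
        dif_neg (show ¬ (j : ℕ) + m < t + m by omega)]
      simp
  · refine ⟨⟨t + j, by omega⟩, ?_⟩
    simp [insertMap]

noncomputable def insertEquiv (l m t : ℕ) (ht : t ≤ l) : Fin (l + m) ≃ Fin l ⊕ Fin m :=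
  Equiv.ofBijective (insertMap l m t ht)
    ((Fintype.bijective_iff_surjective_and_card _).2 ⟨insertMap_surjective l m t ht, by simp⟩)

lemma ofFn_sumElim_insertMap {α : Type*} {l m t : ℕ} (ht : t ≤ l) (f : Fin l → α)
    (g : Fin m → α) :
    List.ofFn (fun i => Sum.elim f g (insertMap l m t ht i)) =
      (List.ofFn f).take t ++ List.ofFn g ++ (List.ofFn f).drop t := by
  apply List.ext_getElem
  · simp; omega
  · intro i h₁ h₂
    simp only [List.getElem_append, List.getElem_ofFn, List.getElem_take, List.getElem_drop,
      List.length_append, List.length_take, List.length_ofFn, insertMap]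
    split_ifs <;> first
      | omega
      | simp only [Sum.elim_inl, Sum.elim_inr] <;> congr 1 <;> ext <;> simp <;> omega

lemma labelsMatch_zero_iff {n l : ℕ} (p : Partition 0 l) (α : Fin 0 → Fin n)
    (γ : Fin l → Fin n) : labelsMatch p α γ ↔ lowerSetoid p ≤ Setoid.ker γ := by
  refine ⟨fun h i j hij => h (.inr i) (.inr j) hij, ?_⟩
  rintro h (i | i) (j | j) hij
  exacts [i.elim0, i.elim0, j.elim0, h hij]

lemma sumPartition_le_ker_sumElim_iff {X Y Z : Type*} (r : Setoid X) (s : Setoid Y)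
    (f : X → Z) (g : Y → Z) :
    sumPartition r s ≤ Setoid.ker (Sum.elim f g) ↔ r ≤ Setoid.ker f ∧ s ≤ Setoid.ker g := by
  refine ⟨fun h => ⟨fun x y hxy => h (.inl hxy), fun x y hxy => h (.inr hxy)⟩, ?_⟩
  rintro ⟨hr, hs⟩ _ _ (⟨hxy⟩ | ⟨hxy⟩)
  exacts [hr hxy, hs hxy]

lemma comap_le_ker_comp_iff {X Y Z : Type*} (e : X ≃ Y) (r : Setoid Y) (f : Y → Z) :
    Setoid.comap e r ≤ Setoid.ker (f ∘ e) ↔ r ≤ Setoid.ker f := by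
  refine ⟨fun h x y hxy => ?_, fun h x y hxy => h hxy⟩
  simpa using @h (e.symm x) (e.symm y) (by simpa [Setoid.comap_rel] using hxy)

lemma lowerSetoid_insertAt_le_ker_iff {n l m : ℕ} (p : Partition 0 l) (q : Partition 0 m)
    (t : ℕ) (ht : t ≤ l) (γp : Fin l → Fin n) (γq : Fin m → Fin n) :
    lowerSetoid (insertAt p q t ht) ≤ Setoid.ker (Sum.elim γp γq ∘ insertEquiv l m t ht) ↔
      lowerSetoid p ≤ Setoid.ker γp ∧ lowerSetoid q ≤ Setoid.ker γq :=
  (comap_le_ker_comp_iff (insertEquiv l m t ht) _ _).trans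
    (sumPartition_le_ker_sumElim_iff _ _ _ _)

section Relations

variable {A : Type*} [Ring A] {n : ℕ} (u : Fin n → Fin n → A)

/-- The right-hand side of `R(p)` for `p ∈ P(0,l)`, in terms of the blocks `s` of `p`. -/
noncomputable def lowerRelSum {l : ℕ} (s : Setoid (Fin l)) (β : Fin l → Fin n) : A :=
  ∑ γ : Fin l → Fin n, if s ≤ Setoid.ker γ then (List.ofFn fun i => u (β i) (γ i)).prod else 0

lemma satisfiesRel_zero_iff {l : ℕ} (p : Partition 0 l) :
    SatisfiesRel u p ↔
      ∀ β, lowerRelSum u (lowerSetoid p) β = if lowerSetoid p ≤ Setoid.ker β then 1 else 0 := by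
  simp only [SatisfiesRel, lowerRelSum, labelsMatch_zero_iff, Fintype.sum_unique,
    List.ofFn_zero, List.prod_nil]
  exact ⟨fun h β => (h default β).symm, fun h _ β => (h β).symm⟩

lemma lowerRelSum_insertAt {l m : ℕ} (p : Partition 0 l) (q : Partition 0 m) (t : ℕ)
    (ht : t ≤ l) (βp : Fin l → Fin n) (βq : Fin m → Fin n) :
    lowerRelSum u (lowerSetoid (insertAt p q t ht)) (Sum.elim βp βq ∘ insertEquiv l m t ht) =
      ∑ γp : Fin l → Fin n, if lowerSetoid p ≤ Setoid.ker γp then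
        ((List.ofFn fun i => u (βp i) (γp i)).take t).prod * lowerRelSum u (lowerSetoid q) βq *
          ((List.ofFn fun i => u (βp i) (γp i)).drop t).prod
      else 0 := by
  have hprod : ∀ γp γq, (List.ofFn fun i => u ((Sum.elim βp βq ∘ insertEquiv l m t ht) i)
      ((Sum.elim γp γq ∘ insertEquiv l m t ht) i)).prod =
      ((List.ofFn fun i => u (βp i) (γp i)).take t).prod *
        (List.ofFn fun j => u (βq j) (γq j)).prod *
        ((List.ofFn fun i => u (βp i) (γp i)).drop t).prod := by
    intro γp γq
    have hu : ∀ x, u (Sum.elim βp βq x) (Sum.elim γp γq x) =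
        Sum.elim (fun i => u (βp i) (γp i)) (fun j => u (βq j) (γq j)) x := by
      rintro (x | x) <;> rfl
    simp only [Function.comp_apply, hu, insertEquiv, Equiv.ofBijective_apply,
      ofFn_sumElim_insertMap, List.prod_append]
  unfold lowerRelSum
  rw [Fintype.sum_fun_eq_sum_sum_sumElim (insertEquiv l m t ht)]
  refine Finset.sum_congr rfl fun γp _ => ?_
  simp only [lowerSetoid_insertAt_le_ker_iff, hprod, Finset.mul_sum, Finset.sum_mul]
  split_ifs with hp <;> simp [hp]

end Relations

theorem satisfiesRel_insertAt_general {A : Type*} [CStarAlgebra A] {n : ℕ}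
    (u : Fin n → Fin n → A)
    {l m : ℕ} (p : Partition 0 l) (q : Partition 0 m)
    (hp : SatisfiesRel u p) (hq : SatisfiesRel u q) (t : ℕ) (ht : t ≤ l) :
    SatisfiesRel u (insertAt p q t ht) := by
  rw [satisfiesRel_zero_iff] at hp hq ⊢
  intro β
  set e := insertEquiv l m t ht
  obtain ⟨βp, βq, rfl⟩ : ∃ βp βq, β = Sum.elim βp βq ∘ e :=
    ⟨(β ∘ e.symm) ∘ .inl, (β ∘ e.symm) ∘ .inr, by
      rw [Sum.elim_comp_inl_inr, Function.comp_assoc, e.symm_comp_self, Function.comp_id]⟩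
  rw [lowerRelSum_insertAt, hq, lowerSetoid_insertAt_le_ker_iff]
  by_cases hβq : lowerSetoid q ≤ Setoid.ker βq
  · simp only [hβq, if_true, and_true, mul_one, List.prod_take_mul_prod_drop]
    exact hp βp
  · simp [hβq]

/-- Appendix B (insertion lemma, for a fixed representation): if the relations `R(p)`
and `R(q)` hold for `p ∈ P(0,l)` and `q ∈ P(0,m)`, then for every `0 ≤ t ≤ l` the
relations of the partition obtained from placing `q` between the `t`-th and
`(t+1)`-th point of `p` hold as well. -/
theorem satisfiesRel_insertAt {A : Type*} [CStarAlgebra A] {n : ℕ}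
    (u : Fin n → Fin n → A) (hsa : ∀ i j, IsSelfAdjoint (u i j))
    {l m : ℕ} (p : Partition 0 l) (q : Partition 0 m)
    (hp : SatisfiesRel u p) (hq : SatisfiesRel u q) (t : ℕ) (ht : t ≤ l) :
    SatisfiesRel u (insertAt p q t ht) :=
  satisfiesRel_insertAt_general u p q hp hq t ht

end PartitionCstar
end

section
/- (Lemma B.3(a), rotation, stated for a fixed representation) Let A be a unital C*-algebra and u_{ij} ∈ A (1 ≤ i,j ≤ n) be self-adjoint, satisfying Σ_{m=1}^n u_{im}u_{jm} = δ_{ij}·1 and Σ_{m=1}^n u_{mi}u_{mj} = δ_{ij}·1 for all i,j. Let p ∈ P(k,l) with k ≥ 1 and suppose the relations R(p) hold for the u_{ij}. Then the relations R(p') hold, where p' ∈ P(k-1, l+1) is the rotated version of p obtained by moving the leftmost upper point of p to the position of a new leftmost lower point; the moved point remains in the same block. -/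
open scoped Classical

namespace PartitionCstar

/-- Inverse of `rotateMap`. -/
def rinv (k l : ℕ) : Fin (k + 1) ⊕ Fin l → Fin k ⊕ Fin (l + 1)
  | Sum.inl a => Fin.cases (Sum.inr 0) (fun a' => Sum.inl a') a
  | Sum.inr b => Sum.inr b.succ

lemma rotateMap_rinv (k l : ℕ) (x : Fin (k + 1) ⊕ Fin l) :
    rotateMap k l (rinv k l x) = x := by
  rcases x with a | b
  · refine Fin.cases ?_ (fun a' => ?_) a <;> simp [rinv, rotateMap]
  · simp [rinv, rotateMap]

lemma elim_rotate {n k l : ℕ} (γ : Fin k → Fin n) (δ : Fin (l + 1) → Fin n)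
    (z : Fin k ⊕ Fin (l + 1)) :
    Sum.elim (Fin.cons (δ 0) γ) (δ ∘ Fin.succ) (rotateMap k l z) = Sum.elim γ δ z := by
  rcases z with a | b
  · simp [rotateMap]
  · refine Fin.cases ?_ (fun b' => ?_) b <;> simp [rotateMap]

lemma labelsMatch_rotate {n k l : ℕ} (p : Partition (k + 1) l)
    (γ : Fin k → Fin n) (δ : Fin (l + 1) → Fin n) :
    labelsMatch (n := n) (rotate p) γ δ ↔
      labelsMatch p (Fin.cons (δ 0) γ) (δ ∘ Fin.succ) := by
  constructor
  · intro h x y hxy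
    have h2 := h (rinv k l x) (rinv k l y) (by
      show p.r (rotateMap k l (rinv k l x)) (rotateMap k l (rinv k l y))
      rwa [rotateMap_rinv, rotateMap_rinv])
    rw [← rotateMap_rinv k l x, ← rotateMap_rinv k l y, elim_rotate, elim_rotate]
    exact h2
  · intro h x y hxy
    have h2 := h (rotateMap k l x) (rotateMap k l y) hxy
    rwa [elim_rotate, elim_rotate] at h2

lemma sum_pi_fin_succ {M : Type*} [AddCommMonoid M] {n m : ℕ}
    (f : (Fin (m + 1) → Fin n) → M) :
    ∑ γ : Fin (m + 1) → Fin n, f γ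
      = ∑ c : Fin n, ∑ γ' : Fin m → Fin n, f (Fin.cons c γ') := by
  rw [← (Fin.consEquiv fun _ => Fin n).sum_comp f, Fintype.sum_prod_type]
  rfl

lemma prod_ofFn_succ {A : Type*} [Monoid A] {m : ℕ} (f : Fin (m + 1) → A) :
    (List.ofFn f).prod = f 0 * (List.ofFn fun i : Fin m => f i.succ).prod := by
  rw [List.ofFn_succ, List.prod_cons]

lemma cons_comp_succ {n l : ℕ} (c : Fin n) (g : Fin l → Fin n) :
    (Fin.cons c g : Fin (l + 1) → Fin n) ∘ Fin.succ = g :=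
  funext fun t => by simp

/-- Lemma B.3(a) (rotation, for a fixed representation): given the pair relations,
if the relations `R(p)` hold for `p ∈ P(k+1,l)`, then the relations of the rotated
partition in `P(k,l+1)` (leftmost upper point moved to the leftmost lower position)
hold as well. -/
theorem satisfiesRel_rotate {A : Type*} [CStarAlgebra A] {n : ℕ}
    (u : Fin n → Fin n → A) (hsa : ∀ i j, IsSelfAdjoint (u i j))
    (hpair₁ : ∀ i j, (∑ m, u i m * u j m) = if i = j then (1 : A) else 0)
    (hpair₂ : ∀ i j, (∑ m, u m i * u m j) = if i = j then (1 : A) else 0)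
    {k l : ℕ} (p : Partition (k + 1) l) (hp : SatisfiesRel u p) :
    SatisfiesRel u (rotate p) := by
  classical
  intro α β
  have key : ∀ c : Fin n,
      (∑ γ'' : Fin l → Fin n,
        if labelsMatch p (Fin.cons c α) γ'' then
          (List.ofFn fun t => u ((β ∘ Fin.succ) t) (γ'' t)).prod else 0)
      = ∑ γ : Fin (k + 1) → Fin n,
          if labelsMatch p γ (β ∘ Fin.succ) then
            (List.ofFn fun s => u (γ s) ((Fin.cons c α : Fin (k + 1) → Fin n) s)).prod
          else 0 :=
    fun c => (hp (Fin.cons c α) (β ∘ Fin.succ)).symm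
  symm
  calc
    (∑ γ' : Fin (l + 1) → Fin n,
        if labelsMatch (rotate p) α γ' then
          (List.ofFn fun t => u (β t) (γ' t)).prod else 0)
      = ∑ c : Fin n, ∑ γ'' : Fin l → Fin n,
          if labelsMatch p (Fin.cons c α) γ'' then
            u (β 0) c * (List.ofFn fun t : Fin l => u ((β ∘ Fin.succ) t) (γ'' t)).prod
          else 0 := by
        rw [sum_pi_fin_succ]
        refine Finset.sum_congr rfl fun c _ => Finset.sum_congr rfl fun γ'' _ => ?_
        rw [labelsMatch_rotate, Fin.cons_zero, cons_comp_succ, prod_ofFn_succ]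
        simp [Function.comp]
    _ = ∑ c : Fin n, u (β 0) c * ∑ γ : Fin (k + 1) → Fin n,
          if labelsMatch p γ (β ∘ Fin.succ) then
            (List.ofFn fun s => u (γ s) ((Fin.cons c α : Fin (k + 1) → Fin n) s)).prod
          else 0 := by
        refine Finset.sum_congr rfl fun c _ => ?_
        rw [← key c, Finset.mul_sum]
        exact Finset.sum_congr rfl fun γ'' _ => by rw [mul_ite, mul_zero]
    _ = ∑ c : Fin n, ∑ d : Fin n, ∑ γ : Fin k → Fin n,
          if labelsMatch p (Fin.cons d γ) (β ∘ Fin.succ) then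
            (u (β 0) c * u d c) * (List.ofFn fun s : Fin k => u (γ s) (α s)).prod
          else 0 := by
        refine Finset.sum_congr rfl fun c _ => ?_
        rw [sum_pi_fin_succ, Finset.mul_sum]
        refine Finset.sum_congr rfl fun d _ => ?_
        rw [Finset.mul_sum]
        refine Finset.sum_congr rfl fun γ _ => ?_
        rw [prod_ofFn_succ]
        simp [mul_assoc, mul_ite]
    _ = ∑ γ : Fin k → Fin n, ∑ d : Fin n, ∑ c : Fin n,
          if labelsMatch p (Fin.cons d γ) (β ∘ Fin.succ) then
            (u (β 0) c * u d c) * (List.ofFn fun s : Fin k => u (γ s) (α s)).prod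
          else 0 := by
        exact (Finset.sum_congr rfl fun c _ => Finset.sum_comm).trans
          (Finset.sum_comm.trans (Finset.sum_congr rfl fun γ _ => Finset.sum_comm))
    _ = ∑ γ : Fin k → Fin n, ∑ d : Fin n,
          if labelsMatch p (Fin.cons d γ) (β ∘ Fin.succ) then
            (if β 0 = d then (1 : A) else 0) *
              (List.ofFn fun s : Fin k => u (γ s) (α s)).prod
          else 0 := by
        refine Finset.sum_congr rfl fun γ _ => Finset.sum_congr rfl fun d _ => ?_
        by_cases h : labelsMatch p (Fin.cons d γ) (β ∘ Fin.succ)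
        · simp only [if_pos h]
          rw [← Finset.sum_mul, hpair₁]
        · simp [if_neg h]
    _ = ∑ γ : Fin k → Fin n,
          if labelsMatch p (Fin.cons (β 0) γ) (β ∘ Fin.succ) then
            (List.ofFn fun s : Fin k => u (γ s) (α s)).prod else 0 := by
        refine Finset.sum_congr rfl fun γ _ => ?_
        have h1 : ∀ d : Fin n,
            (if labelsMatch p (Fin.cons d γ) (β ∘ Fin.succ) then
              (if β 0 = d then (1 : A) else 0) *
                (List.ofFn fun s : Fin k => u (γ s) (α s)).prod
            else 0)
            = if β 0 = d then
                (if labelsMatch p (Fin.cons d γ) (β ∘ Fin.succ) then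
                  (List.ofFn fun s : Fin k => u (γ s) (α s)).prod else 0)
              else 0 := by
          intro d
          by_cases h : β 0 = d <;> simp [h]
        rw [Finset.sum_congr rfl fun d _ => h1 d, Finset.sum_ite_eq]
        simp
    _ = ∑ γ : Fin k → Fin n,
          if labelsMatch (rotate p) γ β then
            (List.ofFn fun s => u (γ s) (α s)).prod else 0 := by
        refine Finset.sum_congr rfl fun γ _ => ?_
        rw [labelsMatch_rotate]

end PartitionCstar
end
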